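/- arXiv:2005.09447 — 9 statements merged into one kernel-verified Lean document; each statement's English description precedes it below -/
import Mathlib

section
/- In any connected graph G, if uv is a good pair and a vertex z is not in the line generated by u and v, then d(z,u) = d(z,v). -/
open SimpleGraph

variable {V : Type*}

/-- The interval between two vertices: vertices on some shortest path. -/
def interval (G : SimpleGraph V) (x y : V) : Set V :=
  {z | G.dist x y = G.dist x z + G.dist z y}

/-- The line generated by two vertices. -/
def line (G : SimpleGraph V) (x y : V) : Set V :=
  {z | z ∈ interval G x y ∨ x ∈ interval G z y ∨ y ∈ interval G x z}

/-- The house graph: a 5-cycle 0-1-2-3-4-0 plus the chord 1-4. -/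
def house : SimpleGraph (Fin 5) :=
  SimpleGraph.fromEdgeSet {s(0,1), s(1,2), s(2,3), s(3,4), s(4,0), s(1,4)}

/-- A graph is {house, hole}-free if it has no induced house and no induced
cycle of length at least 5. -/
def HHFree (G : SimpleGraph V) : Prop :=
  IsEmpty (house ↪g G) ∧ ∀ n, 5 ≤ n → IsEmpty (cycleGraph n ↪g G)

/-- A graph is hole-free if it has no induced cycle of length at least 5. -/
def HoleFree (G : SimpleGraph V) : Prop :=
  ∀ n, 5 ≤ n → IsEmpty (cycleGraph n ↪g G)

/-- A good pair: two vertices at distance 2 with a common neighbour `c`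
such that `line u c = line c v`. -/
def GoodPair (G : SimpleGraph V) (u v : V) : Prop :=
  G.dist u v = 2 ∧ ∃ c, G.Adj u c ∧ G.Adj c v ∧ line G u c = line G c v

/-- The set of all lines of a graph (generated by pairs of distinct vertices). -/
def lineSet (G : SimpleGraph V) : Set (Set V) :=
  {ℓ | ∃ u v : V, u ≠ v ∧ line G u v = ℓ}

theorem stmt2 (G : SimpleGraph V) (hG : G.Connected) (u v z : V)
    (huv : GoodPair G u v) (hz : z ∉ line G u v) :
    G.dist z u = G.dist z v := by
  obtain ⟨hd2, c, huc, hcv, hline⟩ := huv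
  have duc : G.dist u c = 1 := SimpleGraph.dist_eq_one_iff_adj.2 huc
  have dcv : G.dist c v = 1 := SimpleGraph.dist_eq_one_iff_adj.2 hcv
  -- distances
  have t1 : G.dist z c ≤ G.dist z u + G.dist u c := hG.dist_triangle
  have t2 : G.dist z c ≤ G.dist z v + G.dist v c := hG.dist_triangle
  have t3 : G.dist z u ≤ G.dist z c + G.dist c u := hG.dist_triangle
  have t4 : G.dist z v ≤ G.dist z c + G.dist c v := hG.dist_triangle
  have t5 : G.dist z u ≤ G.dist z v + G.dist v u := hG.dist_triangle
  have t6 : G.dist z v ≤ G.dist z u + G.dist u v := hG.dist_triangle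
  have cvc : G.dist v c = 1 := by rw [G.dist_comm]; exact dcv
  have ccu : G.dist c u = 1 := by rw [G.dist_comm]; exact duc
  have cvu : G.dist v u = 2 := by rw [G.dist_comm]; exact hd2
  have czu : G.dist u z = G.dist z u := G.dist_comm ..
  have czv : G.dist v z = G.dist z v := G.dist_comm ..
  have czc : G.dist c z = G.dist z c := G.dist_comm ..
  simp only [line, interval, Set.mem_setOf_eq, not_or] at hz
  obtain ⟨hz1, hz2, hz3⟩ := hz
  simp only [hd2, czu, czv] at hz1 hz2 hz3
  by_contra hne
  have key : z ∈ line G u c ↔ z ∈ line G c v := by rw [hline]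
  simp only [line, interval, Set.mem_setOf_eq, duc, dcv, czu, czv, czc,
    ccu, cvc] at key
  -- key : (1 = dist z u + dist z c ∨ dist z c = dist z u + 1 ∨ dist z u = 1 + dist z c)
  --   ↔ (1 = dist z c + dist z v ∨ dist z v = dist z c + 1 ∨ dist z c = 1 + dist z v)
  rcases lt_or_gt_of_ne hne with h | h
  · -- dist z u < dist z v, so dist z v = dist z u + 1
    have hb : G.dist z v = G.dist z u + 1 := by omega
    -- dist z c ∈ {dist z u, dist z u + 1}
    have hm : G.dist z c = G.dist z u ∨ G.dist z c = G.dist z u + 1 := by omega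
    rcases hm with hm | hm <;> omega
  · have hb : G.dist z u = G.dist z v + 1 := by omega
    have hm : G.dist z c = G.dist z v ∨ G.dist z c = G.dist z v + 1 := by omega
    rcases hm with hm | hm <;> omega
end

section
/- In any connected graph G, if uv is a good pair, then for every vertex c with d(u,c)=d(c,v)=1 and d(u,v)=2 (i.e., every common neighbour of u and v), the line generated by c and u equals the line generated by c and v. -/
open SimpleGraph

variable {V : Type*}

lemma mem_line_adj (G : SimpleGraph V) (hG : G.Connected) {x y : V} (hxy : G.Adj x y)
    (z : V) : z ∈ line G x y ↔ G.dist z x ≠ G.dist z y := by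
  have hxy1 : G.dist x y = 1 := dist_eq_one_iff_adj.mpr hxy
  have hyx1 : G.dist y x = 1 := dist_eq_one_iff_adj.mpr hxy.symm
  have t1 : G.dist z x ≤ G.dist z y + G.dist y x := hG.dist_triangle
  have t2 : G.dist z y ≤ G.dist z x + G.dist x y := hG.dist_triangle
  have hzx : G.dist x z = G.dist z x := dist_comm
  have hzy : G.dist y z = G.dist z y := dist_comm
  have hd0x : G.dist z x = 0 ↔ z = x := by
    rw [dist_eq_zero_iff_eq_or_not_reachable]
    simp [hG.preconnected z x]
  have hd0y : G.dist z y = 0 ↔ z = y := by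
    rw [dist_eq_zero_iff_eq_or_not_reachable]
    simp [hG.preconnected z y]
  constructor
  · rintro (h | h | h) <;> simp only [interval, Set.mem_setOf_eq] at h <;> omega
  · intro h
    simp only [line, interval, Set.mem_setOf_eq]
    omega

theorem stmt3 (G : SimpleGraph V) (hG : G.Connected) (u v : V)
    (huv : GoodPair G u v) :
    ∀ c : V, G.Adj u c → G.Adj c v → line G c u = line G c v := by
  obtain ⟨_, c₀, huc₀, hc₀v, hline⟩ := huv
  intro c hcu hccv
  ext z
  rw [mem_line_adj G hG hcu.symm z, mem_line_adj G hG hccv z]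
  have h1 := (mem_line_adj G hG huc₀ z).symm.trans
    ((Set.ext_iff.mp hline z).trans (mem_line_adj G hG hc₀v z))
  have a1 : G.dist z c ≤ G.dist z u + 1 := by
    have := hG.dist_triangle (u := z) (v := u) (w := c)
    rwa [dist_eq_one_iff_adj.mpr hcu] at this
  have a2 : G.dist z u ≤ G.dist z c + 1 := by
    have := hG.dist_triangle (u := z) (v := c) (w := u)
    rwa [dist_eq_one_iff_adj.mpr hcu.symm] at this
  have b1 : G.dist z v ≤ G.dist z c + 1 := by
    have := hG.dist_triangle (u := z) (v := c) (w := v)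
    rwa [dist_eq_one_iff_adj.mpr hccv] at this
  have b2 : G.dist z c ≤ G.dist z v + 1 := by
    have := hG.dist_triangle (u := z) (v := v) (w := c)
    rwa [dist_eq_one_iff_adj.mpr hccv.symm] at this
  have e1 : G.dist z c₀ ≤ G.dist z u + 1 := by
    have := hG.dist_triangle (u := z) (v := u) (w := c₀)
    rwa [dist_eq_one_iff_adj.mpr huc₀] at this
  have e2 : G.dist z u ≤ G.dist z c₀ + 1 := by
    have := hG.dist_triangle (u := z) (v := c₀) (w := u)
    rwa [dist_eq_one_iff_adj.mpr huc₀.symm] at this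
  have f1 : G.dist z v ≤ G.dist z c₀ + 1 := by
    have := hG.dist_triangle (u := z) (v := c₀) (w := v)
    rwa [dist_eq_one_iff_adj.mpr hc₀v] at this
  have f2 : G.dist z c₀ ≤ G.dist z v + 1 := by
    have := hG.dist_triangle (u := z) (v := v) (w := c₀)
    rwa [dist_eq_one_iff_adj.mpr hc₀v.symm] at this
  omega
end

section
/- Let G be a connected {house, hole}-free graph and uv an edge of G. Then for every vertex z not in the line generated by u and v, there exists a common neighbour w of u and v such that w lies on a shortest path from z to u and on a shortest path from z to v. -/
/-!
Among the vertices on shortest paths from `z` to both `u` and `v`, pick `p` closest to `u`, and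
let `k = d(p,u) = d(p,v)`. Shortest paths `a` from `p` to `u` and `b` from `p` to `v` then share
no vertex but `p` and have no edge `a s b (s+1)` or `b s a (s+1)` with `s ≥ 1`: its end `a s`
(or `b s`) would lie on shortest paths to both `u` and `v`. Between two consecutive rungs `a i b i`
of this ladder (counting `a 0 = b 0` and the edge `a k b k = uv` as rungs) the two paths close an
induced cycle, which is a hole unless the rungs are at consecutive levels. So if `k ≥ 2`, every
level carries a rung and `p, a 1, a 2, b 2, b 1` is an induced house. Hence `k = 1` and `w = p`
works. Finally, `z ∉ line u v` says exactly that `d(z,u) = d(z,v)`.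
-/

open SimpleGraph

variable {V : Type*}

lemma Fin.val_sub_eq_one_iff {n : ℕ} (hn : 2 ≤ n) {i j : Fin n} :
    (i - j).val = 1 ↔ i.val = j.val + 1 ∨ i.val = 0 ∧ j.val + 1 = n := by
  have := i.isLt
  rcases le_or_gt j i with h | h
  · rw [Fin.coe_sub_iff_le.mpr h]
    have : j.val ≤ i.val := h
    omega
  · rw [Fin.coe_sub_iff_lt.mpr h]
    have : j.val < n := j.isLt
    have : i.val < j.val := h
    omega

section

variable {G : SimpleGraph V}

lemma exists_walk_length_eq_of_adj_succ {a : ℕ → V} {m n : ℕ} (hmn : m ≤ n)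
    (h : ∀ i, m ≤ i → i < n → G.Adj (a i) (a (i + 1))) :
    ∃ p : G.Walk (a m) (a n), p.length = n - m := by
  induction n, hmn using Nat.le_induction with
  | base => exact ⟨.nil, by simp⟩
  | succ n hmn ih =>
    obtain ⟨p, hp⟩ := ih fun i hi hin => h i hi (by omega)
    exact ⟨p.concat (h n hmn (by omega)), by simp [hp]; omega⟩

structure IsGeodesicSeq (G : SimpleGraph V) (a : ℕ → V) (k : ℕ) : Prop where
  adj : ∀ i < k, G.Adj (a i) (a (i + 1))
  dist : G.dist (a 0) (a k) = k

namespace IsGeodesicSeq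

variable {a : ℕ → V} {k : ℕ}

lemma dist_eq_of_le (ha : IsGeodesicSeq G a k) {i : ℕ} (hi : i ≤ k) :
    G.dist (a 0) (a i) = i ∧ G.dist (a i) (a k) = k - i := by
  obtain ⟨p, hp⟩ := exists_walk_length_eq_of_adj_succ (a := a) (Nat.zero_le i)
    fun j _ hj => ha.adj j (by omega)
  obtain ⟨q, hq⟩ := exists_walk_length_eq_of_adj_succ (a := a) hi
    fun j _ hj => ha.adj j hj
  have htri := p.reachable.dist_triangle_left (a k)
  have := dist_le p
  have := dist_le q
  have := ha.dist
  omega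

lemma mem_interval (ha : IsGeodesicSeq G a k) {i : ℕ} (hi : i ≤ k) :
    a i ∈ interval G (a 0) (a k) := by
  have := ha.dist_eq_of_le hi
  have := ha.dist
  change G.dist (a 0) (a k) = _ + _
  omega

lemma adj_iff (ha : IsGeodesicSeq G a k) {s t : ℕ} (hs : s ≤ k) (ht : t ≤ k) :
    G.Adj (a s) (a t) ↔ t = s + 1 ∨ s = t + 1 := by
  refine ⟨fun h => ?_, ?_⟩
  · have hlevel := h.diff_dist_adj (u := a 0)
    rw [(ha.dist_eq_of_le hs).1, (ha.dist_eq_of_le ht).1] at hlevel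
    grind [h.ne]
  · rintro (rfl | rfl)
    · exact ha.adj s (by omega)
    · exact (ha.adj t (by omega)).symm

lemma eq_of_apply_eq (ha : IsGeodesicSeq G a k) {s t : ℕ} (hs : s ≤ k) (ht : t ≤ k)
    (h : a s = a t) : s = t := by
  rw [← (ha.dist_eq_of_le hs).1, ← (ha.dist_eq_of_le ht).1, h]

end IsGeodesicSeq

lemma SimpleGraph.Reachable.exists_isGeodesicSeq {x y : V} (h : G.Reachable x y) :
    ∃ a, IsGeodesicSeq G a (G.dist x y) ∧ a 0 = x ∧ a (G.dist x y) = y := by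
  obtain ⟨p, hp⟩ := h.exists_walk_length_eq_dist
  refine ⟨p.getVert, ⟨fun i hi => p.adj_getVert_succ (by omega), ?_⟩, p.getVert_zero, ?_⟩
  · rw [p.getVert_zero, ← hp, p.getVert_length, hp]
  · rw [← hp, p.getVert_length]

lemma nonempty_cycleGraph_embedding_of_seq {n : ℕ} (hn : 2 ≤ n) (c : ℕ → V)
    (hinj : ∀ i j, i < j → j < n → c i ≠ c j)
    (hadj : ∀ i j, i < j → j < n → (G.Adj (c i) (c j) ↔ j = i + 1 ∨ i = 0 ∧ j + 1 = n)) :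
    Nonempty (cycleGraph n ↪g G) := by
  have hadj' : ∀ i j : Fin n, i.val < j.val → (G.Adj (c i) (c j) ↔ (cycleGraph n).Adj i j) := by
    intro i j hij
    rw [hadj i j hij j.isLt, cycleGraph_adj', Fin.val_sub_eq_one_iff hn, Fin.val_sub_eq_one_iff hn]
    omega
  refine ⟨⟨⟨fun i => c i, fun i j hij => ?_⟩, fun {i j} => ?_⟩⟩
  · by_contra hne
    rcases Nat.lt_or_gt_of_ne (Fin.val_ne_of_ne hne) with h | h
    · exact hinj i j h j.isLt hij
    · exact hinj j i h i.isLt hij.symm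
  · change G.Adj (c i) (c j) ↔ _
    rcases lt_trichotomy i.val j.val with h | h | h
    · exact hadj' i j h
    · simp [Fin.ext h]
    · rw [G.adj_comm, (cycleGraph n).adj_comm]
      exact hadj' j i h

lemma nonempty_cycleGraph_embedding_of_paths {x y : ℕ → V} {p q : ℕ}
    (hx : ∀ i ≤ p, ∀ j ≤ p, G.Adj (x i) (x j) ↔ j = i + 1 ∨ i = j + 1)
    (hy : ∀ i ≤ q, ∀ j ≤ q, G.Adj (y i) (y j) ↔ j = i + 1 ∨ i = j + 1)
    (hxy : ∀ i ≤ p, ∀ j ≤ q, G.Adj (x i) (y j) ↔ i = 0 ∧ j = 0 ∨ i = p ∧ j = q)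
    (hx_inj : ∀ i ≤ p, ∀ j ≤ p, x i = x j → i = j)
    (hy_inj : ∀ i ≤ q, ∀ j ≤ q, y i = y j → i = j)
    (hxy_ne : ∀ i ≤ p, ∀ j ≤ q, x i ≠ y j) :
    Nonempty (cycleGraph (p + q + 2) ↪g G) := by
  apply nonempty_cycleGraph_embedding_of_seq (by omega)
    (fun l => if l ≤ p then x l else y (p + q + 1 - l))
  · intro i j hij hjn
    split_ifs with hi hj hj
    · exact fun h => absurd (hx_inj i hi j hj h) (by omega)
    · exact hxy_ne i hi _ (by omega)
    · omega
    · exact fun h => absurd (hy_inj _ (by omega) _ (by omega) h) (by omega)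
  · intro i j hij hjn
    split_ifs with hi hj hj
    · rw [hx i hi j hj]; omega
    · rw [hxy i hi _ (by omega)]; omega
    · omega
    · rw [hy _ (by omega) _ (by omega)]; omega

lemma nonempty_house_embedding {x₀ x₁ x₂ x₃ x₄ : V}
    (h₀₁ : G.Adj x₀ x₁) (h₁₂ : G.Adj x₁ x₂) (h₂₃ : G.Adj x₂ x₃) (h₃₄ : G.Adj x₃ x₄)
    (h₄₀ : G.Adj x₄ x₀) (h₁₄ : G.Adj x₁ x₄)
    (h₀₂ : ¬G.Adj x₀ x₂) (h₀₃ : ¬G.Adj x₀ x₃) (h₁₃ : ¬G.Adj x₁ x₃) (h₂₄ : ¬G.Adj x₂ x₄) :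
    Nonempty (house ↪g G) := by
  have n₀₂ : x₀ ≠ x₂ := by rintro rfl; exact h₀₃ h₂₃
  have n₀₃ : x₀ ≠ x₃ := by rintro rfl; exact h₀₂ h₂₃.symm
  have n₁₃ : x₁ ≠ x₃ := by rintro rfl; exact h₀₃ h₀₁
  have n₂₄ : x₂ ≠ x₄ := by rintro rfl; exact h₀₂ h₄₀.symm
  refine ⟨⟨⟨![x₀, x₁, x₂, x₃, x₄], fun i j hij => ?_⟩, fun {i j} => ?_⟩⟩
  · fin_cases i <;> fin_cases j <;>
      simp_all [h₀₁.ne, h₁₂.ne, h₂₃.ne, h₃₄.ne, h₄₀.ne, h₁₄.ne]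
  · change G.Adj (![x₀, x₁, x₂, x₃, x₄] i) (![x₀, x₁, x₂, x₃, x₄] j) ↔ house.Adj i j
    fin_cases i <;> fin_cases j <;>
      simp [house, h₀₁, h₁₂, h₂₃, h₃₄, h₄₀, h₁₄, h₀₁.symm, h₁₂.symm, h₂₃.symm, h₃₄.symm,
        h₄₀.symm, h₁₄.symm, h₀₂, h₀₃, h₁₃, h₂₄, G.adj_comm x₂ x₀, G.adj_comm x₃ x₀,
        G.adj_comm x₃ x₁, G.adj_comm x₄ x₂]

lemma interval_subset_interval (hG : G.Connected) {z p u : V} (hp : p ∈ interval G z u) :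
    interval G p u ⊆ interval G z u := by
  intro q hq
  have h₁ : G.dist z u ≤ G.dist z q + G.dist q u := hG.dist_triangle
  have h₂ : G.dist z q ≤ G.dist z p + G.dist p q := hG.dist_triangle
  change G.dist z u = _ + _ at hp ⊢
  change G.dist p u = _ + _ at hq
  omega

lemma dist_eq_of_notMem_line (hG : G.Connected) {u v z : V} (huv : G.Adj u v)
    (hz : z ∉ line G u v) : G.dist z u = G.dist z v := by
  have hu : G.dist z v ≠ G.dist z u + G.dist u v := fun h => hz (Or.inr (Or.inl h))
  have hv : G.dist u z ≠ G.dist u v + G.dist v z := fun h => hz (Or.inr (Or.inr h))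
  have h₁ : G.dist z v ≤ G.dist z u + G.dist u v := hG.dist_triangle
  have h₂ : G.dist z u ≤ G.dist z v + G.dist v u := hG.dist_triangle
  have : G.dist u v = 1 := dist_eq_one_iff_adj.mpr huv
  have : G.dist v u = 1 := dist_eq_one_iff_adj.mpr huv.symm
  have : G.dist u z = G.dist z u := dist_comm
  have : G.dist v z = G.dist z v := dist_comm
  omega

structure GateFreePair (G : SimpleGraph V) (k : ℕ) (a b : ℕ → V) : Prop where
  left : IsGeodesicSeq G a k
  right : IsGeodesicSeq G b k
  start_eq : a 0 = b 0
  adj_end : G.Adj (a k) (b k)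
  inter_subset : interval G (a 0) (a k) ∩ interval G (a 0) (b k) ⊆ {a 0}

namespace GateFreePair

variable {k : ℕ} {a b : ℕ → V}

lemma symm (h : GateFreePair G k a b) : GateFreePair G k b a where
  left := h.right
  right := h.left
  start_eq := h.start_eq.symm
  adj_end := h.adj_end.symm
  inter_subset := by
    rw [← h.start_eq, Set.inter_comm]
    exact h.inter_subset

lemma dist_right (h : GateFreePair G k a b) {t : ℕ} (ht : t ≤ k) : G.dist (a 0) (b t) = t :=
  h.start_eq ▸ (h.right.dist_eq_of_le ht).1

lemma eq_zero_of_eq (h : GateFreePair G k a b) {s t : ℕ} (hs : s ≤ k) (ht : t ≤ k)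
    (hst : a s = b t) : s = 0 ∧ t = 0 := by
  have hts : t = s := by rw [← h.dist_right ht, ← hst, (h.left.dist_eq_of_le hs).1]
  have hmem : a s ∈ interval G (a 0) (b k) := hst ▸ h.start_eq ▸ h.right.mem_interval ht
  have := h.left.eq_of_apply_eq hs (Nat.zero_le k)
    (h.inter_subset ⟨h.left.mem_interval hs, hmem⟩)
  omega

lemma eq_zero_of_adj_succ (hG : G.Connected) (h : GateFreePair G k a b) {s : ℕ} (hs : s < k)
    (hadj : G.Adj (a s) (b (s + 1))) : s = 0 := by
  have hmem : a s ∈ interval G (a 0) (b k) := by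
    have h₁ := (h.left.dist_eq_of_le hs.le).1
    have h₂ := (h.right.dist_eq_of_le (i := s + 1) hs).2
    have h₃ : G.dist (a s) (b k) ≤ G.dist (a s) (b (s + 1)) + G.dist (b (s + 1)) (b k) :=
      hG.dist_triangle
    have h₄ : G.dist (a 0) (b k) ≤ G.dist (a 0) (a s) + G.dist (a s) (b k) := hG.dist_triangle
    have h₅ := h.dist_right le_rfl
    rw [dist_eq_one_iff_adj.mpr hadj] at h₃
    change G.dist (a 0) (b k) = _ + _
    omega
  exact h.left.eq_of_apply_eq hs.le (Nat.zero_le k)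
    (h.inter_subset ⟨h.left.mem_interval hs.le, hmem⟩)

lemma eq_or_of_adj (hG : G.Connected) (h : GateFreePair G k a b) {s t : ℕ} (hs : s ≤ k)
    (ht : t ≤ k) (hadj : G.Adj (a s) (b t)) : s = t ∨ s = 0 ∧ t = 1 ∨ s = 1 ∧ t = 0 := by
  have hlevel := hadj.diff_dist_adj (u := a 0)
  rw [(h.left.dist_eq_of_le hs).1, h.dist_right ht] at hlevel
  rcases hlevel with h₁ | h₁ | h₁
  · omega
  · have := h.eq_zero_of_adj_succ hG (s := s) (by omega) (h₁ ▸ hadj)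
    omega
  · rcases Nat.eq_zero_or_pos s with hs₀ | hs₀
    · omega
    · have := h.symm.eq_zero_of_adj_succ hG (s := t) (by omega)
        ((show s = t + 1 by omega) ▸ hadj.symm)
      omega

lemma exists_adj_below_of_holeFree (hG : G.Connected) (hHole : HoleFree G)
    (h : GateFreePair G k a b) {j : ℕ} (hj₂ : 2 ≤ j) (hjk : j ≤ k) (hj : G.Adj (a j) (b j)) :
    ∃ l, 0 < l ∧ l < j ∧ G.Adj (a l) (b l) := by
  by_contra! hgap
  -- `a 0, …, a j, b j, …, b 1` is an induced cycle of length `2 j + 1`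
  obtain ⟨f⟩ := nonempty_cycleGraph_embedding_of_paths (G := G) (x := a)
    (y := fun l => b (l + 1)) (p := j) (q := j - 1)
    (fun s hs t ht => h.left.adj_iff (by omega) (by omega))
    (fun s hs t ht => by rw [h.right.adj_iff (by omega) (by omega)]; omega)
    (fun s hs t ht => by
      constructor
      · intro hadj
        have := h.eq_or_of_adj hG (by omega) (by omega) hadj
        have := hgap s
        grind
      · rintro (⟨rfl, rfl⟩ | ⟨rfl, rfl⟩)
        · exact h.start_eq ▸ h.right.adj 0 (by omega)
        · rwa [Nat.sub_add_cancel (by omega)])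
    (fun s hs t ht => h.left.eq_of_apply_eq (by omega) (by omega))
    (fun s hs t ht hst => by have := h.right.eq_of_apply_eq (by omega) (by omega) hst; omega)
    (fun s hs t ht hst => by have := h.eq_zero_of_eq (by omega) (by omega) hst; omega)
  exact (hHole _ (by omega)).false f

lemma exists_adj_between_of_holeFree (hG : G.Connected) (hHole : HoleFree G)
    (h : GateFreePair G k a b) {i j : ℕ} (hi₀ : 0 < i) (hij : i + 2 ≤ j) (hjk : j ≤ k)
    (hi : G.Adj (a i) (b i)) (hj : G.Adj (a j) (b j)) :
    ∃ l, i < l ∧ l < j ∧ G.Adj (a l) (b l) := by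
  by_contra! hgap
  -- `a i, …, a j, b j, …, b i` is an induced cycle of length `2 (j - i) + 2`
  obtain ⟨f⟩ := nonempty_cycleGraph_embedding_of_paths (G := G) (x := fun l => a (i + l))
    (y := fun l => b (i + l)) (p := j - i) (q := j - i)
    (fun s hs t ht => by rw [h.left.adj_iff (by omega) (by omega)]; omega)
    (fun s hs t ht => by rw [h.right.adj_iff (by omega) (by omega)]; omega)
    (fun s hs t ht => by
      constructor
      · intro hadj
        have := h.eq_or_of_adj hG (by omega) (by omega) hadj
        have := hgap (i + s)
        grind
      · rintro (⟨rfl, rfl⟩ | ⟨rfl, rfl⟩)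
        · exact hi
        · rwa [Nat.add_sub_cancel' (by omega)])
    (fun s hs t ht hst => by have := h.left.eq_of_apply_eq (by omega) (by omega) hst; omega)
    (fun s hs t ht hst => by have := h.right.eq_of_apply_eq (by omega) (by omega) hst; omega)
    (fun s hs t ht hst => by have := h.eq_zero_of_eq (by omega) (by omega) hst; omega)
  exact (hHole _ (by omega)).false f

lemma adj_pred_of_holeFree (hG : G.Connected) (hHole : HoleFree G) (h : GateFreePair G k a b)
    {j : ℕ} (hj₂ : 2 ≤ j) (hjk : j ≤ k) (hj : G.Adj (a j) (b j)) :
    G.Adj (a (j - 1)) (b (j - 1)) := by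
  classical
  set i := Nat.findGreatest (fun l => G.Adj (a l) (b l)) (j - 1) with hi_def
  have hi₀ : 0 < i := by
    obtain ⟨l, hl₀, hlj, hl⟩ := h.exists_adj_below_of_holeFree hG hHole hj₂ hjk hj
    exact Nat.findGreatest_pos.mpr ⟨l, hl₀, by omega, hl⟩
  have hi : G.Adj (a i) (b i) := Nat.findGreatest_of_ne_zero hi_def.symm hi₀.ne'
  have hij : i ≤ j - 1 := Nat.findGreatest_le _
  obtain hij' | hij' := eq_or_lt_of_le hij
  · rwa [← hij']
  · obtain ⟨l, hil, hlj, hl⟩ :=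
      h.exists_adj_between_of_holeFree hG hHole hi₀ (by omega) hjk hi hj
    exact absurd hl (Nat.findGreatest_is_greatest hil (by omega))

lemma adj_of_holeFree (hG : G.Connected) (hHole : HoleFree G) (h : GateFreePair G k a b)
    {i : ℕ} (hi₀ : 0 < i) (hik : i ≤ k) : G.Adj (a i) (b i) := by
  refine Nat.decreasingInduction' (P := fun l => G.Adj (a l) (b l)) (fun l hlk hil ih => ?_) hik
    h.adj_end
  simpa using h.adj_pred_of_holeFree hG hHole (j := l + 1) (by omega) hlk ih

lemma le_one (hG : G.Connected) (hH : HHFree G) (h : GateFreePair G k a b) : k ≤ 1 := by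
  by_contra! hk
  have h₁ := h.adj_of_holeFree hG hH.2 (i := 1) (by omega) (by omega)
  have h₂ := h.adj_of_holeFree hG hH.2 (i := 2) (by omega) (by omega)
  obtain ⟨f⟩ := nonempty_house_embedding (x₀ := a 0) (x₁ := a 1) (x₂ := a 2) (x₃ := b 2)
    (x₄ := b 1) (h.left.adj 0 (by omega)) (h.left.adj 1 (by omega)) h₂
    (h.right.adj 1 (by omega)).symm (h.start_eq ▸ (h.right.adj 0 (by omega)).symm) h₁
    (by rw [h.left.adj_iff (by omega) (by omega)]; omega)
    (by rw [h.start_eq, h.right.adj_iff (by omega) (by omega)]; omega)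
    (fun hadj => one_ne_zero (h.eq_zero_of_adj_succ hG (by omega) hadj))
    (fun hadj => one_ne_zero (h.symm.eq_zero_of_adj_succ hG (by omega) hadj.symm))
  exact hH.1.false f

end GateFreePair

namespace HHFree

lemma dist_le_one_of_interval_inter_subset (hG : G.Connected) (hH : HHFree G) {z u v : V}
    (huv : G.Adj u v) (hd : G.dist z u = G.dist z v)
    (hsub : interval G z u ∩ interval G z v ⊆ {z}) : G.dist z u ≤ 1 := by
  obtain ⟨a, ha, ha₀, hak⟩ := (hG.preconnected z u).exists_isGeodesicSeq
  obtain ⟨b, hb, hb₀, hbk⟩ := (hG.preconnected z v).exists_isGeodesicSeq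
  rw [← hd] at hb hbk
  refine GateFreePair.le_one hG hH (a := a) (b := b) ⟨ha, hb, ha₀.trans hb₀.symm, ?_, ?_⟩
  · rwa [hak, hbk]
  · rwa [ha₀, hak, hbk]

theorem exists_adj_adj_dist_add_one (hG : G.Connected) (hH : HHFree G) {z u v : V}
    (huv : G.Adj u v) (hd : G.dist z u = G.dist z v) :
    ∃ w, G.Adj u w ∧ G.Adj v w ∧ G.dist z w + 1 = G.dist z u := by
  have hz : z ∈ interval G z u ∩ interval G z v := by
    constructor <;> simp [interval]
  obtain ⟨p, ⟨hpu, hpv⟩, hmin⟩ := exists_minimalFor_of_wellFoundedLT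
    (· ∈ interval G z u ∩ interval G z v) (fun p => G.dist p u) ⟨z, hz⟩
  have hpd : G.dist p u = G.dist p v := by
    change G.dist z u = _ + _ at hpu
    change G.dist z v = _ + _ at hpv
    omega
  have hsub : interval G p u ∩ interval G p v ⊆ {p} := by
    rintro q ⟨hqu, hqv⟩
    have hq := hmin ⟨interval_subset_interval hG hpu hqu, interval_subset_interval hG hpv hqv⟩
    change G.dist p u = _ + _ at hqu
    have : G.dist p q = 0 := by simp only at hq; omega
    exact (hG.dist_eq_zero_iff.mp this).symm
  have hle := dist_le_one_of_interval_inter_subset hG hH huv hpd hsub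
  have hne : G.dist p u ≠ 0 := by
    intro h0
    have hpu' : p = u := hG.dist_eq_zero_iff.mp h0
    have hpv' : p = v := hG.dist_eq_zero_iff.mp (hpd ▸ h0)
    exact huv.ne (hpu'.symm.trans hpv')
  refine ⟨p, (dist_eq_one_iff_adj.mp (by omega)).symm, (dist_eq_one_iff_adj.mp (by omega)).symm,
    ?_⟩
  change G.dist z u = _ + _ at hpu
  omega

end HHFree

end

theorem stmt5 (G : SimpleGraph V) (hG : G.Connected) (hH : HHFree G)
    (u v z : V) (huv : G.Adj u v) (hz : z ∉ line G u v) :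
    ∃ w : V, G.Adj u w ∧ G.Adj v w ∧ w ∈ interval G z u ∧ w ∈ interval G z v := by
  have hd := dist_eq_of_notMem_line hG huv hz
  obtain ⟨w, huw, hvw, hw⟩ := hH.exists_adj_adj_dist_add_one hG huv hd
  refine ⟨w, huw, hvw, ?_, ?_⟩
  · change G.dist z u = G.dist z w + G.dist w u
    rw [dist_eq_one_iff_adj.mpr huw.symm, hw]
  · change G.dist z v = G.dist z w + G.dist w v
    rw [dist_eq_one_iff_adj.mpr hvw.symm, hw, hd]
end

section
/- Let G be a connected {house, hole}-free graph with a cycle C = (x_1, x_2, ..., x_k) of length at least 5 such that x_2 x_k is an edge (a chord), and x_1 and x_2 have no neighbours in C other than their neighbours on the cycle and this chord. Then x_3 x_k is an edge of G. -/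
open SimpleGraph

variable {V : Type*}

/-!
Walk along the cycle from `x 2` to `x (k - 1)`, always jumping to the last cycle vertex adjacent
to the current one. This gives an induced path `P` from `x 2` to `x (k - 1)` whose interior
consists of cycle vertices strictly between them, hence non-adjacent to `x 0` and `x 1`.
If `P` has two edges, then `x 0`, `x 1` and `P` form a house (its roof is `x 0`, its chord
`x 1 x (k - 1)`); if `P` has at least three edges, then `x 1` and `P` form a hole.
So `P` is the single edge `x 2 x (k - 1)`.
-/

theorem SimpleGraph.cycleGraph_adj_iff_val {n : ℕ} {a b : Fin (n + 2)} :
    (cycleGraph (n + 2)).Adj a b ↔ a.val + 1 = b.val ∨ b.val + 1 = a.val ∨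
      (a.val = 0 ∧ b.val = n + 1) ∨ (b.val = 0 ∧ a.val = n + 1) := by
  have hsub : ∀ c d : Fin (n + 2),
      (c - d).val = if d.val ≤ c.val then c.val - d.val else n + 2 + c.val - d.val := by
    intro c d
    split_ifs with h
    · exact Fin.coe_sub_iff_le.2 h
    · exact Fin.coe_sub_iff_lt.2 (not_le.1 h)
  rw [cycleGraph_adj', hsub, hsub]
  have := a.isLt
  have := b.isLt
  split_ifs <;> omega

section

variable {G : SimpleGraph V}

theorem nonempty_house_embedding_s6 {v₀ v₁ v₂ v₃ v₄ : V}
    (h01 : G.Adj v₀ v₁) (h12 : G.Adj v₁ v₂) (h23 : G.Adj v₂ v₃) (h34 : G.Adj v₃ v₄)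
    (h04 : G.Adj v₀ v₄) (h14 : G.Adj v₁ v₄)
    (h02 : ¬G.Adj v₀ v₂) (h03 : ¬G.Adj v₀ v₃) (h13 : ¬G.Adj v₁ v₃) (h24 : ¬G.Adj v₂ v₄) :
    Nonempty (house ↪g G) := by
  let g : Fin 5 → V := ![v₀, v₁, v₂, v₃, v₄]
  have hadj : ∀ a b, G.Adj (g a) (g b) ↔ house.Adj a b := by
    intro a b
    fin_cases a <;> fin_cases b <;>
      simp [g, house, G.adj_comm, h01, h12, h23, h34, h04, h14, h02, h03, h13, h24]
  -- No two vertices of the house have the same neighbourhood, so `g` is injective.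
  have htwin : ∀ a b : Fin 5, (∀ w, house.Adj a w ↔ house.Adj b w) → a = b := by
    unfold house
    decide
  have hg : Function.Injective g := fun a b hab =>
    htwin a b fun w => by rw [← hadj, ← hadj, hab]
  exact ⟨⟨⟨g, hg⟩, hadj _ _⟩⟩

/-- The vertices `p 0, …, p m` need not be distinct. -/
def IsChordlessWalk (G : SimpleGraph V) (p : ℕ → V) (m : ℕ) : Prop :=
  (∀ i < m, G.Adj (p i) (p (i + 1))) ∧ ∀ i j, i + 2 ≤ j → j ≤ m → ¬G.Adj (p i) (p j)

theorem IsChordlessWalk.adj_iff {p : ℕ → V} {m i j : ℕ} (hp : IsChordlessWalk G p m)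
    (hi : i ≤ m) (hj : j ≤ m) : G.Adj (p i) (p j) ↔ i + 1 = j ∨ j + 1 = i := by
  constructor
  · intro hadj
    by_contra hne
    rcases lt_trichotomy i j with hij | rfl | hij
    · exact hp.2 i j (by omega) hj hadj
    · exact G.irrefl hadj
    · exact hp.2 j i (by omega) hi hadj.symm
  · rintro (rfl | rfl)
    · exact hp.1 i (by omega)
    · exact (hp.1 j (by omega)).symm

/-- Greedily jumping to the last neighbour along a walk yields a chordless sub-walk. -/
theorem exists_chordlessWalk_subseq (q : ℕ → V) {a b : ℕ} (hab : a ≤ b)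
    (hq : ∀ i, a ≤ i → i < b → G.Adj (q i) (q (i + 1))) :
    ∃ m f, f 0 = a ∧ f m = b ∧ StrictMonoOn f (Set.Iic m) ∧ IsChordlessWalk G (q ∘ f) m := by
  induction hd : b - a using Nat.strong_induction_on generalizing a with
  | _ d ih =>
  rcases hab.eq_or_lt with rfl | hlt
  · refine ⟨0, fun _ => a, rfl, rfl, fun i hi j hj hij => ?_,
      fun i hi => absurd hi (Nat.not_lt_zero i), fun i j hij hj => by omega⟩
    simp only [Set.mem_Iic] at hi hj
    omega
  classical
  set c := Nat.findGreatest (fun c => G.Adj (q a) (q c)) b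
  have hac : a < c := Nat.le_findGreatest hlt (hq a le_rfl hlt)
  have hcb : c ≤ b := Nat.findGreatest_le b
  have hadj : G.Adj (q a) (q c) :=
    Nat.findGreatest_spec (P := fun c => G.Adj (q a) (q c)) hlt (hq a le_rfl hlt)
  obtain ⟨m, f, hf0, hfm, hmono, hf⟩ :=
    ih (b - c) (by omega) hcb (fun i hi hib => hq i (by omega) hib) rfl
  refine ⟨m + 1, fun | 0 => a | i + 1 => f i, rfl, hfm, ?_, ⟨?_, ?_⟩⟩
  · refine strictMonoOn_of_lt_add_one Set.ordConnected_Iic fun i _ _ hi => ?_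
    rcases i with _ | i
    · simpa [hf0] using hac
    · exact hmono (by simp at hi ⊢; omega) (by simp at hi ⊢; omega) (by omega)
  · rintro (_ | i) hi
    · simpa [hf0] using hadj
    · exact hf.1 i (by omega)
  · rintro (_ | i) (_ | j) hij hj
    · omega
    · have hcj : c < f j := hf0 ▸ hmono (by simp) (by simp; omega) (by omega)
      have hjb : f j ≤ b :=
        (hmono.monotoneOn (by simp; omega) (by simp) (by omega)).trans_eq hfm
      exact Nat.findGreatest_is_greatest hcj hjb
    · omega
    · exact hf.2 i j (by omega) (by omega)

theorem nonempty_cycleGraph_embedding_of_chordlessWalk {p : ℕ → V} {m : ℕ} {v : V}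
    (hm : 3 ≤ m) (hp : IsChordlessWalk G p m) (hinj : Set.InjOn p (Set.Iic m))
    (hv : ∀ i ≤ m, G.Adj v (p i) ↔ i = 0 ∨ i = m) :
    Nonempty (cycleGraph (m + 2) ↪g G) := by
  have hvp : ∀ i ≤ m, v ≠ p i := by
    rintro i hi rfl
    have h0 := (hp.adj_iff hi m.zero_le).1 ((hv 0 m.zero_le).2 (Or.inl rfl))
    have hm := (hp.adj_iff hi le_rfl).1 ((hv m le_rfl).2 (Or.inr rfl))
    omega
  let c : Fin (m + 2) → V := Fin.snoc (α := fun _ => V) (fun i : Fin (m + 1) => p i) v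
  have hadj : ∀ a b, G.Adj (c a) (c b) ↔ (cycleGraph (m + 2)).Adj a b := by
    intro a b
    rw [cycleGraph_adj_iff_val]
    induction a using Fin.lastCases <;> induction b using Fin.lastCases <;>
      simp only [c, Fin.snoc_last, Fin.snoc_castSucc, Fin.val_last, Fin.val_castSucc, and_true]
    · simp
    · rename_i j
      rw [hv j (by omega)]
      omega
    · rename_i i
      rw [G.adj_comm, hv i (by omega)]
      omega
    · rename_i i j
      rw [hp.adj_iff (by omega) (by omega)]
      omega
  have hc : Function.Injective c := by
    intro a b hab
    induction a using Fin.lastCases <;> induction b using Fin.lastCases <;>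
      simp only [c, Fin.snoc_last, Fin.snoc_castSucc] at hab
    · rfl
    · exact absurd hab (hvp _ (by omega))
    · exact absurd hab.symm (hvp _ (by omega))
    · rename_i i j
      rw [Fin.ext (hinj (by simp; omega) (by simp; omega) hab)]
  exact ⟨⟨⟨c, hc⟩, hadj _ _⟩⟩

theorem HHFree.adj_of_cycle_with_chord (hH : HHFree G) {q : ℕ → V} {k : ℕ} (hk : 5 ≤ k)
    (hinj : Set.InjOn q (Set.Iio k)) (hstep : ∀ i, i + 1 < k → G.Adj (q i) (q (i + 1)))
    (hwrap : G.Adj (q 0) (q (k - 1))) (hchord : G.Adj (q 1) (q (k - 1)))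
    (h0 : ∀ i < k, G.Adj (q 0) (q i) → i = 1 ∨ i = k - 1)
    (h1 : ∀ i < k, G.Adj (q 1) (q i) → i = 0 ∨ i = 2 ∨ i = k - 1) :
    G.Adj (q 2) (q (k - 1)) := by
  obtain ⟨m, f, hf0, hfm, hmono, hp⟩ :=
    exists_chordlessWalk_subseq (G := G) q (a := 2) (b := k - 1) (by omega)
      fun i _ hi => hstep i (by omega)
  have hbound : ∀ i ≤ m, 2 ≤ f i ∧ f i ≤ k - 1 := fun i hi =>
    ⟨hf0 ▸ hmono.monotoneOn (by simp) (by simpa) (by omega),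
      hfm ▸ hmono.monotoneOn (by simpa) (by simp) hi⟩
  have hinterior : ∀ i, 0 < i → i < m → 2 < f i ∧ f i < k - 1 := fun i h0i him =>
    ⟨hf0 ▸ hmono (by simp) (by simp; omega) h0i, hfm ▸ hmono (by simp; omega) (by simp) him⟩
  rcases m with _ | _ | _ | m
  · omega
  · simpa [hf0, hfm] using hp.1 0 one_pos
  · obtain ⟨h2, h3⟩ := hinterior 1 one_pos one_lt_two
    have e23 : G.Adj (q 2) (q (f 1)) := by simpa [hf0] using hp.1 0 two_pos
    have e34 : G.Adj (q (f 1)) (q (k - 1)) := by simpa [hfm] using hp.1 1 one_lt_two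
    have n24 : ¬G.Adj (q 2) (q (k - 1)) := by simpa [hf0, hfm] using hp.2 0 2 le_rfl le_rfl
    obtain ⟨e⟩ := nonempty_house_embedding_s6 (hstep 0 (by omega)) (hstep 1 (by omega)) e23 e34
      hwrap hchord (fun h => by have := h0 2 (by omega) h; omega)
      (fun h => by have := h0 _ (by omega) h; omega) (fun h => by have := h1 _ (by omega) h; omega)
      n24
    exact (hH.1.false e).elim
  · have hv : ∀ i ≤ m + 3, G.Adj (q 1) ((q ∘ f) i) ↔ i = 0 ∨ i = m + 3 := by
      intro i hi
      constructor
      · intro h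
        rcases h1 (f i) (by have := hbound i hi; omega) h with h | h | h
        · have := hbound i hi
          omega
        · exact .inl (hmono.injOn (by simpa) (by simp) (h.trans hf0.symm))
        · exact .inr (hmono.injOn (by simpa) (by simp) (h.trans hfm.symm))
      · rintro (rfl | rfl)
        · simpa [hf0] using hstep 1 (by omega)
        · simpa [hfm] using hchord
    obtain ⟨e⟩ := nonempty_cycleGraph_embedding_of_chordlessWalk (by omega) hp
      (hinj.comp hmono.injOn fun i hi => by simp at hi ⊢; have := hbound i hi; omega) hv
    exact ((hH.2 _ (by omega)).false e).elim

end

theorem stmt6 (G : SimpleGraph V) (hH : HHFree G)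
    (k : ℕ) (hk : 5 ≤ k) (x : Fin k → V) (hinj : Function.Injective x)
    (hcyc : ∀ i : Fin k, G.Adj (x i) (x (i + ⟨1, by omega⟩)))
    (hchord : G.Adj (x ⟨1, by omega⟩) (x ⟨k - 1, by omega⟩))
    (hx1 : ∀ i : Fin k, G.Adj (x ⟨0, by omega⟩) (x i) →
      i = ⟨1, by omega⟩ ∨ i = ⟨k - 1, by omega⟩)
    (hx2 : ∀ i : Fin k, G.Adj (x ⟨1, by omega⟩) (x i) →
      i = ⟨0, by omega⟩ ∨ i = ⟨2, by omega⟩ ∨ i = ⟨k - 1, by omega⟩) :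
    G.Adj (x ⟨2, by omega⟩) (x ⟨k - 1, by omega⟩) := by
  let q : ℕ → V := fun i => x ⟨i % k, Nat.mod_lt _ (by omega)⟩
  have hq : ∀ i (hi : i < k), q i = x ⟨i, hi⟩ := fun i hi => by
    simp only [q, Nat.mod_eq_of_lt hi]
  have hsucc : ∀ i (hi : i < k), q (i + 1) = x (⟨i, hi⟩ + ⟨1, by omega⟩) := fun i hi => rfl
  have hq_zero : q 0 = q (k - 1 + 1) := by
    simp only [q, Nat.sub_add_cancel (by omega : 1 ≤ k), Nat.mod_self, Nat.zero_mod]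
  rw [← hq 2, ← hq (k - 1)]
  refine hH.adj_of_cycle_with_chord hk (fun i hi j hj h => ?_) (fun i hi => ?_) ?_ ?_
    (fun i hi h => ?_) (fun i hi h => ?_)
  · rw [hq i hi, hq j hj] at h
    exact congrArg Fin.val (hinj h)
  · rw [hq i (by omega), hsucc i (by omega)]
    exact hcyc _
  · rw [hq_zero, hsucc _ (by omega), hq (k - 1) (by omega)]
    exact (hcyc _).symm
  · rw [hq 1 (by omega), hq (k - 1) (by omega)]
    exact hchord
  · rw [hq 0 (by omega), hq i hi] at h
    simpa [Fin.ext_iff] using hx1 _ h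
  · rw [hq 1 (by omega), hq i hi] at h
    simpa [Fin.ext_iff] using hx2 _ h
end

section
/- Let G be a connected {house, hole}-free graph and C an induced 4-cycle in G with vertices x_0, x_1, x_2, x_3 in cyclic order. If a vertex z is at distance k from both x_0 and x_1, then z is at distance at most k from x_2 or from x_3. -/
open SimpleGraph

variable {V : Type*}

section Aux
variable {G : SimpleGraph V}

lemma cycleAdj_iff {n : ℕ} (hn : 5 ≤ n) (a b : Fin n) :
    (cycleGraph n).Adj a b ↔ (b.val = a.val + 1 ∨ a.val = b.val + 1 ∨
      (a.val = 0 ∧ b.val = n - 1) ∨ (b.val = 0 ∧ a.val = n - 1)) := by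
  have ha := a.isLt; have hb := b.isLt
  rw [cycleGraph_adj']
  have hsub : ∀ u v : Fin n, (u - v).val = ((n - v.val) + u.val) % n := fun u v => by
    rw [Fin.sub_def]
  have e : ∀ u v : Fin n, ((u - v).val = 1 ↔
      ((n - v.val) + u.val = 1 ∨ (n - v.val) + u.val = n + 1)) := by
    intro u v
    have hu := u.isLt; have hv := v.isLt
    rw [hsub]
    constructor
    · intro h
      rcases Nat.lt_or_ge ((n - v.val) + u.val) n with hl | hl
      · left; rwa [Nat.mod_eq_of_lt hl] at h
      · right
        rw [Nat.mod_eq_sub_mod hl, Nat.mod_eq_of_lt (by omega)] at h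
        omega
    · rintro (h | h)
      · rw [h]; exact Nat.mod_eq_of_lt (by omega)
      · rw [h, Nat.mod_eq_sub_mod (by omega), Nat.mod_eq_of_lt (by omega)]
        omega
  rw [e, e]
  omega

lemma no_hole (hHole : HoleFree G) (n : ℕ) (hn : 5 ≤ n) (f : ℕ → V)
    (hinj : ∀ i j, i < j → j < n → f i ≠ f j)
    (hconsec : ∀ i, i + 1 < n → G.Adj (f i) (f (i+1)))
    (hwrap : G.Adj (f (n-1)) (f 0))
    (hnadj : ∀ i j, i < j → j < n → j ≠ i+1 → ¬(i = 0 ∧ j = n-1) → ¬G.Adj (f i) (f j)) :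
    False := by
  have inj : Function.Injective (fun a : Fin n => f a.val) := by
    intro a b hab
    by_contra hne
    have hne' : a.val ≠ b.val := fun h => hne (Fin.ext h)
    rcases Nat.lt_or_ge a.val b.val with h | h
    · exact hinj _ _ h b.isLt hab
    · exact hinj _ _ (by omega) a.isLt hab.symm
  have hiff : ∀ a b : Fin n, G.Adj (f a.val) (f b.val) ↔ (cycleGraph n).Adj a b := by
    intro a b
    rw [cycleAdj_iff hn]
    constructor
    · intro h
      by_contra hc
      rcases Nat.lt_trichotomy a.val b.val with hl | he | hl
      · exact hnadj _ _ hl b.isLt (fun hj => hc (Or.inl hj))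
          (fun hh => hc (Or.inr (Or.inr (Or.inl hh)))) h
      · exact h.ne (congrArg f he)
      · exact hnadj _ _ hl a.isLt (fun hj => hc (Or.inr (Or.inl hj)))
          (fun hh => hc (Or.inr (Or.inr (Or.inr hh)))) h.symm
    · intro h
      rcases h with h | h | h | h
      · have h2 := hconsec a.val (by omega)
        rwa [← h] at h2
      · have h2 := hconsec b.val (by omega)
        rw [← h] at h2
        exact h2.symm
      · rw [h.1, h.2]; exact hwrap.symm
      · rw [h.1, h.2]; exact hwrap
  exact (hHole n hn).false ⟨⟨fun a => f a.val, inj⟩, fun {a b} => hiff a b⟩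

lemma exists_geo (hG : G.Connected) (z x : V) (k : ℕ) (hk : G.dist z x = k) :
    ∃ f : ℕ → V, f 0 = z ∧ f k = x ∧ (∀ i, i < k → G.Adj (f i) (f (i+1))) ∧
      (∀ i, i ≤ k → G.dist z (f i) = i) := by
  obtain ⟨p, hp⟩ := hG.exists_walk_length_eq_dist z x
  rw [hk] at hp
  refine ⟨p.getVert, p.getVert_zero, ?_, fun i hi => p.adj_getVert_succ (by omega), ?_⟩
  · rw [← hp]; exact p.getVert_length
  have hub : ∀ i, G.dist z (p.getVert i) ≤ i := by
    intro i; induction i with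
    | zero => simp [p.getVert_zero]
    | succ i ih =>
      by_cases h : i < p.length
      · have hadj := p.adj_getVert_succ h
        have h1 := hG.dist_triangle (u := z) (v := p.getVert i) (w := p.getVert (i+1))
        have h2 : G.dist (p.getVert i) (p.getVert (i+1)) = 1 := dist_eq_one_iff_adj.mpr hadj
        omega
      · rw [p.getVert_of_length_le (by omega)]
        have h3 : p.getVert i = x := p.getVert_of_length_le (by omega)
        rw [h3] at ih
        omega
  have hub2 : ∀ j, G.dist (p.getVert (p.length - j)) x ≤ j := by
    intro j; induction j with
    | zero => simp [p.getVert_length]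
    | succ j ih =>
      by_cases h : j < p.length
      · have h1 : p.length - (j+1) < p.length := by omega
        have hadj := p.adj_getVert_succ h1
        have he : p.length - (j+1) + 1 = p.length - j := by omega
        rw [he] at hadj
        have h2 := hG.dist_triangle (u := p.getVert (p.length - (j+1)))
          (v := p.getVert (p.length - j)) (w := x)
        have h3 : G.dist (p.getVert (p.length - (j+1))) (p.getVert (p.length - j)) = 1 :=
          dist_eq_one_iff_adj.mpr hadj
        omega
      · have he : p.length - (j+1) = p.length - j := by omega
        rw [he]; omega
  intro i hi
  have h1 := hub i
  have h2 := hub2 (p.length - i)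
  have he : p.length - (p.length - i) = i := by omega
  rw [he] at h2
  have htr := hG.dist_triangle (u := z) (v := p.getVert i) (w := x)
  rw [hk] at htr
  omega

lemma hole_core (hG : G.Connected) (hHole : HoleFree G) {k s t : ℕ} {z : V}
    (P Q : ℕ → V)
    (hPd : ∀ i, i ≤ k → G.dist z (P i) = i) (hQd : ∀ i, i ≤ k → G.dist z (Q i) = i)
    (hPadj : ∀ i, i < k → G.Adj (P i) (P (i+1))) (hQadj : ∀ i, i < k → G.Adj (Q i) (Q (i+1)))
    (hxy : G.Adj (P k) (Q k))
    (hmax : ∀ a b, a ≤ k → b ≤ k → (P a = Q b ∨ G.Adj (P a) (Q b)) →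
      ¬(a = k ∧ b = k) → a + b ≤ s + t)
    (hadj : G.Adj (P s) (Q t)) (hpq : P s ≠ Q t)
    (hs : s < k) (ht : t < k)
    (hn : 5 ≤ (k - s) + (k - t) + 2) : False := by
  set m1 := k - s with hm1
  set m2 := k - t with hm2
  set n := m1 + m2 + 2 with hnn
  set f : ℕ → V := fun i => if i ≤ m1 then P (s + i) else Q (k + 1 - (i - m1)) with hf
  have hA : ∀ i, i ≤ m1 → f i = P (s + i) := fun i h => by simp [hf, h]
  have hB : ∀ i, m1 < i → f i = Q (k + 1 - (i - m1)) := fun i h => by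
    simp [hf, Nat.not_le.mpr h]
  -- distances
  have hdP : ∀ i, i ≤ m1 → G.dist z (f i) = s + i := fun i h => by
    rw [hA i h]; exact hPd (s + i) (by omega)
  have hdQ : ∀ i, m1 < i → i < n → G.dist z (f i) = k + 1 - (i - m1) := fun i h h' => by
    rw [hB i h]; exact hQd (k + 1 - (i - m1)) (by omega)
  -- common incidence analysis
  have hcommon : ∀ i j, i < j → j < n → (f i = f j ∨ G.Adj (f i) (f j)) →
      ((j = i + 1 ∨ (i = 0 ∧ j = n - 1)) ∧ f i ≠ f j) := by
    intro i j hij hjn hin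
    by_cases hi : i ≤ m1
    · by_cases hj : j ≤ m1
      · -- both on P side
        have di := hdP i hi
        have dj := hdP j hj
        have hne : f i ≠ f j := fun h => by rw [h] at di; omega
        have hadj' : G.Adj (f i) (f j) := hin.resolve_left hne
        have h1 := hG.dist_triangle (u := z) (v := f i) (w := f j)
        have h2 : G.dist (f i) (f j) = 1 := dist_eq_one_iff_adj.mpr hadj'
        exact ⟨Or.inl (by omega), hne⟩
      · -- cross
        push_neg at hj
        have hji : 1 ≤ j - m1 ∧ j - m1 ≤ m2 + 1 := by omega
        rw [hA i hi, hB j hj] at hin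
        set a := s + i with hav
        set b := k + 1 - (j - m1) with hbv
        have hak : a ≤ k := by omega
        have hbk : b ≤ k := by omega
        have hbt : t ≤ b := by omega
        by_cases habk : a = k ∧ b = k
        · have hik : i = m1 := by omega
          have hjk : j = m1 + 1 := by omega
          refine ⟨Or.inl (by omega), ?_⟩
          rw [hA i hi, hB j hj, ← hav, ← hbv, habk.1, habk.2]
          exact hxy.ne
        · have := hmax a b hak hbk hin habk
          have hia : a = s ∧ b = t := by omega
          have hi0 : i = 0 := by omega
          have hj1 : j = n - 1 := by omega
          refine ⟨Or.inr ⟨hi0, hj1⟩, ?_⟩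
          rw [hA i hi, hB j hj, ← hav, ← hbv, hia.1, hia.2]
          exact hpq
    · -- both on Q side
      push_neg at hi
      have hj : m1 < j := by omega
      have di := hdQ i hi (by omega)
      have dj := hdQ j hj hjn
      have hne : f i ≠ f j := fun h => by rw [h] at di; omega
      have hadj' : G.Adj (f i) (f j) := hin.resolve_left hne
      have h1 := hG.dist_triangle (u := z) (v := f j) (w := f i)
      have h2 : G.dist (f j) (f i) = 1 := dist_eq_one_iff_adj.mpr hadj'.symm
      exact ⟨Or.inl (by omega), hne⟩
  have hinj : ∀ i j, i < j → j < n → f i ≠ f j := fun i j h1 h2 he =>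
    (hcommon i j h1 h2 (Or.inl he)).2 he
  have hnadj : ∀ i j, i < j → j < n → j ≠ i+1 → ¬(i = 0 ∧ j = n-1) → ¬G.Adj (f i) (f j) := by
    intro i j h1 h2 h3 h4 ha
    rcases (hcommon i j h1 h2 (Or.inr ha)).1 with h | h
    · exact h3 h
    · exact h4 h
  have hconsec : ∀ i, i + 1 < n → G.Adj (f i) (f (i+1)) := by
    intro i hilt
    by_cases h1 : i + 1 ≤ m1
    · rw [hA i (by omega), hA (i+1) h1]
      have := hPadj (s + i) (by omega)
      rwa [show s + (i + 1) = s + i + 1 by omega]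
    · by_cases h2 : i ≤ m1
      · -- i = m1
        have him : i = m1 := by omega
        rw [hA i h2, hB (i+1) (by omega)]
        rw [show s + i = k by omega, show k + 1 - (i + 1 - m1) = k by omega]
        exact hxy
      · push_neg at h2
        have hj1 : 1 ≤ i - m1 ∧ i - m1 ≤ m2 := by omega
        rw [hB i h2, hB (i+1) (by omega)]
        rw [show k + 1 - (i + 1 - m1) = k - (i - m1) by omega]
        have := hQadj (k - (i - m1)) (by omega)
        rw [show k - (i - m1) + 1 = k + 1 - (i - m1) by omega] at this
        exact this.symm
  have hwrap : G.Adj (f (n-1)) (f 0) := by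
    rw [hA 0 (by omega), hB (n-1) (by omega)]
    rw [show k + 1 - (n - 1 - m1) = t by omega, show s + 0 = s by omega]
    exact hadj.symm
  exact no_hole hHole n (by omega) f hinj hconsec hwrap hnadj

def Pk (G : SimpleGraph V) (k : ℕ) : Prop :=
  ∀ z x0 x1 x2 x3 : V, x0 ≠ x2 → x1 ≠ x3 →
    G.Adj x0 x1 → G.Adj x1 x2 → G.Adj x2 x3 → G.Adj x3 x0 →
    ¬G.Adj x0 x2 → ¬G.Adj x1 x3 →
    G.dist z x0 = k → G.dist z x1 = k →
    G.dist z x2 ≤ k ∨ G.dist z x3 ≤ k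


lemma tc (hG : G.Connected) (hHole : HoleFree G)
    (k : ℕ) (hk : 1 ≤ k) (IH : ∀ m, m < k → Pk G m)
    (z x y : V) (hxy : G.Adj x y) (hx : G.dist z x = k) (hy : G.dist z y = k) :
    ∃ w, G.Adj w x ∧ G.Adj w y ∧ G.dist z w = k - 1 := by
  classical
  obtain ⟨P, hP0, hPk, hPadj, hPd⟩ := exists_geo hG z x k hx
  obtain ⟨Q, hQ0, hQk, hQadj, hQd⟩ := exists_geo hG z y k hy
  let S : Finset (ℕ × ℕ) := (Finset.range (k+1) ×ˢ Finset.range (k+1)).filter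
      (fun p => (P p.1 = Q p.2 ∨ G.Adj (P p.1) (Q p.2)) ∧ ¬(p.1 = k ∧ p.2 = k))
  have hS0 : (0, 0) ∈ S := by
    refine Finset.mem_filter.mpr ⟨Finset.mem_product.mpr
      ⟨Finset.mem_range.mpr (by omega), Finset.mem_range.mpr (by omega)⟩,
      Or.inl (by rw [hP0, hQ0]), fun h => by omega⟩
  obtain ⟨p0, hp0S, hmaxp⟩ := S.exists_max_image (fun p => p.1 + p.2) ⟨_, hS0⟩
  obtain ⟨s, t⟩ := p0
  have hmem := Finset.mem_filter.mp hp0S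
  dsimp only at hmem
  have hs : s ≤ k := by
    have := (Finset.mem_product.mp hmem.1).1
    rw [Finset.mem_range] at this; omega
  have ht : t ≤ k := by
    have := (Finset.mem_product.mp hmem.1).2
    rw [Finset.mem_range] at this; omega
  obtain ⟨hst, hnkk⟩ := hmem.2
  have hmax : ∀ a b, a ≤ k → b ≤ k → (P a = Q b ∨ G.Adj (P a) (Q b)) →
      ¬(a = k ∧ b = k) → a + b ≤ s + t := by
    intro a b ha hb h1 h2
    exact hmaxp (a, b) (Finset.mem_filter.mpr ⟨Finset.mem_product.mpr
      ⟨Finset.mem_range.mpr (by omega), Finset.mem_range.mpr (by omega)⟩, h1, h2⟩)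
  by_cases hsk : s = k
  · -- s = k : w = Q t with t = k-1
    have htk : t < k := by
      rcases Nat.lt_or_ge t k with h | h
      · exact h
      · exact absurd ⟨hsk, by omega⟩ hnkk
    rw [hsk] at hst
    rcases hst with heq | hadjx
    · exfalso
      have h1 := hPd k le_rfl
      have h2 := hQd t (by omega)
      rw [heq] at h1; omega
    · have h1 := hG.dist_triangle (u := z) (v := Q t) (w := P k)
      have h2 : G.dist (Q t) (P k) = 1 := dist_eq_one_iff_adj.mpr hadjx.symm
      have h3 := hPd k le_rfl
      have h4 := hQd t (by omega)
      have htv : t = k - 1 := by omega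
      refine ⟨Q t, ?_, ?_, ?_⟩
      · rw [← hPk]; exact hadjx.symm
      · have h5 := hQadj t (by omega)
        rwa [show t + 1 = k by omega, hQk] at h5
      · rw [hQd t (by omega)]; omega
  by_cases htk : t = k
  · -- t = k : w = P s with s = k-1
    have hsk' : s < k := by omega
    rw [htk] at hst
    rcases hst with heq | hadjy
    · exfalso
      have h1 := hQd k le_rfl
      have h2 := hPd s (by omega)
      rw [← heq] at h1; omega
    · have h1 := hG.dist_triangle (u := z) (v := P s) (w := Q k)
      have h2 : G.dist (P s) (Q k) = 1 := dist_eq_one_iff_adj.mpr hadjy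
      have h3 := hQd k le_rfl
      have h4 := hPd s (by omega)
      have hsv : s = k - 1 := by omega
      refine ⟨P s, ?_, ?_, ?_⟩
      · have h5 := hPadj s (by omega)
        rwa [show s + 1 = k by omega, hPk] at h5
      · rw [← hQk]; exact hadjy
      · rw [hPd s (by omega)]; omega
  -- main case : s < k, t < k
  have hsk' : s < k := by omega
  have htk' : t < k := by omega
  have hpq : P s ≠ Q t := by
    intro he
    have hstv : s = t := by
      have h1 := hPd s (by omega)
      have h2 := hQd t (by omega)
      rw [he] at h1; omega
    have h3 : G.Adj (P s) (Q (s+1)) := by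
      rw [he, ← hstv]; exact hQadj s (by omega)
    have := hmax s (s+1) (by omega) (by omega) (Or.inr h3) (by omega)
    omega
  have hadjst : G.Adj (P s) (Q t) := hst.resolve_left hpq
  by_cases hC4 : s = k - 1 ∧ t = k - 1
  · -- induced C4, use IH at k-1 for a contradiction
    exfalso
    obtain ⟨hs1, ht1⟩ := hC4
    have hPsx : G.Adj x (P s) := by
      have h5 := hPadj s (by omega)
      rw [show s + 1 = k by omega, hPk] at h5
      exact h5.symm
    have hQty : G.Adj (Q t) y := by
      have h5 := hQadj t (by omega)
      rwa [show t + 1 = k by omega, hQk] at h5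
    have ne02' : P s ≠ y := by
      intro he
      have := hmax s k (by omega) le_rfl (Or.inl (by rw [he, hQk])) (fun h => by omega)
      omega
    have ne13' : Q t ≠ x := by
      intro he
      have := hmax k t le_rfl (by omega) (Or.inl (by rw [hPk, ← he])) (fun h => by omega)
      omega
    have h02' : ¬ G.Adj (P s) y := by
      intro hA
      have := hmax s k (by omega) le_rfl (Or.inr (by rwa [hQk])) (fun h => by omega)
      omega
    have h13' : ¬ G.Adj (Q t) x := by
      intro hA
      have := hmax k t le_rfl (by omega) (Or.inr (by rw [hPk]; exact hA.symm)) (fun h => by omega)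
      omega
    have hres := IH (k-1) (by omega) z (P s) (Q t) y x ne02' ne13' hadjst hQty hxy.symm hPsx
      h02' h13' (by rw [hPd s (by omega)]; omega) (by rw [hQd t (by omega)]; omega)
    rcases hres with h | h
    · rw [hy] at h; omega
    · rw [hx] at h; omega
  · -- hole
    exfalso
    refine hole_core hG hHole P Q hPd hQd hPadj hQadj ?_ hmax hadjst hpq hsk' htk' (by omega)
    rw [hPk, hQk]; exact hxy

lemma no_house (hH : IsEmpty (house ↪g G)) (w x0 x1 x2 x3 : V)
    (d02 : x0 ≠ x2) (d13 : x1 ≠ x3)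
    (a01 : G.Adj x0 x1) (a12 : G.Adj x1 x2) (a23 : G.Adj x2 x3) (a30 : G.Adj x3 x0)
    (aw1 : G.Adj w x1) (aw0 : G.Adj x0 w)
    (n02 : ¬G.Adj x0 x2) (n13 : ¬G.Adj x1 x3) (nw2 : ¬G.Adj w x2) (nw3 : ¬G.Adj w x3) :
    False := by
  have a10 := a01.symm; have a21 := a12.symm; have a32 := a23.symm; have a03 := a30.symm
  have a1w := aw1.symm; have a0w := aw0; have aw0' := aw0.symm
  have n20 : ¬G.Adj x2 x0 := fun h => n02 h.symm
  have n31 : ¬G.Adj x3 x1 := fun h => n13 h.symm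
  have n2w : ¬G.Adj x2 w := fun h => nw2 h.symm
  have n3w : ¬G.Adj x3 w := fun h => nw3 h.symm
  have dw1 : w ≠ x1 := aw1.ne
  have dw0 : w ≠ x0 := aw0.ne'
  have dw2 : w ≠ x2 := fun h => n02 (h ▸ aw0)
  have dw3 : w ≠ x3 := fun h => n31 (h ▸ aw1)
  have d1w := dw1.symm; have d0w := dw0.symm; have d2w := dw2.symm; have d3w := dw3.symm
  have d12 : x1 ≠ x2 := a12.ne
  have d23 : x2 ≠ x3 := a23.ne
  have d10 : x1 ≠ x0 := a01.ne'
  have d30 : x3 ≠ x0 := a30.ne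
  have d21 := d12.symm; have d32 := d23.symm; have d01 := d10.symm
  have d03 := d30.symm; have d20 := d02.symm; have d31 := d13.symm
  let g : Fin 5 → V := ![w, x1, x2, x3, x0]
  have inj : Function.Injective g := by
    intro a b h
    fin_cases a <;> fin_cases b <;>
      simp only [g, Matrix.cons_val_zero, Matrix.cons_val_one, Matrix.head_cons,
        Matrix.cons_val_two, Matrix.tail_cons, Matrix.cons_val_three,
        Matrix.cons_val_four, Matrix.cons_val_fin_one, Fin.isValue] at h <;>
      first
        | rfl
        | exact absurd h (by assumption)
  have hiff : ∀ a b : Fin 5, G.Adj (g a) (g b) ↔ house.Adj a b := by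
    intro a b
    fin_cases a <;> fin_cases b <;>
      simp only [g, Matrix.cons_val_zero, Matrix.cons_val_one, Matrix.head_cons,
        Matrix.cons_val_two, Matrix.tail_cons, Matrix.cons_val_three,
        Matrix.cons_val_four, Matrix.cons_val_fin_one, Fin.isValue] <;>
      simp only [house, fromEdgeSet_adj, Set.mem_insert_iff, Set.mem_singleton_iff,
        Sym2.eq_iff] <;>
      first
        | (refine iff_of_true (by assumption) ⟨by decide, by decide⟩)
        | (refine iff_of_false (by assumption) (by decide))
        | (refine iff_of_false (G.irrefl) (by decide))
  exact hH.false ⟨⟨g, inj⟩, fun {a b} => hiff a b⟩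

lemma pstep (hG : G.Connected) (hH : HHFree G) (k : ℕ) (IH : ∀ m, m < k → Pk G m) :
    Pk G k := by
  intro z x0 x1 x2 x3 ne02 ne13 h01 h12 h23 h30 n02 n13 d0 d1
  rcases Nat.eq_zero_or_pos k with hk0 | hk
  · exfalso
    subst hk0
    have e0 : z = x0 := (hG.dist_eq_zero_iff).mp d0
    have e1 : z = x1 := (hG.dist_eq_zero_iff).mp d1
    exact h01.ne (e0 ▸ e1)
  · obtain ⟨w, hwx0, hwx1, hwd⟩ := tc hG hH.2 k hk IH z x0 x1 h01 d0 d1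
    by_cases hw2 : G.Adj w x2
    · left
      have h1 := hG.dist_triangle (u := z) (v := w) (w := x2)
      have h2 : G.dist w x2 = 1 := dist_eq_one_iff_adj.mpr hw2
      omega
    by_cases hw3 : G.Adj w x3
    · right
      have h1 := hG.dist_triangle (u := z) (v := w) (w := x3)
      have h2 : G.dist w x3 = 1 := dist_eq_one_iff_adj.mpr hw3
      omega
    exact absurd (no_house hH.1 w x0 x1 x2 x3 ne02 ne13 h01 h12 h23 h30 hwx1 hwx0.symm
      n02 n13 hw2 hw3) not_false

end Aux

theorem stmt7 (G : SimpleGraph V) (hG : G.Connected) (hH : HHFree G)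
    (x0 x1 x2 x3 : V) (hnd : ([x0, x1, x2, x3] : List V).Nodup)
    (h01 : G.Adj x0 x1) (h12 : G.Adj x1 x2) (h23 : G.Adj x2 x3)
    (h30 : G.Adj x3 x0) (h02 : ¬ G.Adj x0 x2) (h13 : ¬ G.Adj x1 x3)
    (z : V) (k : ℕ) (hz0 : G.dist z x0 = k) (hz1 : G.dist z x1 = k) :
    G.dist z x2 ≤ k ∨ G.dist z x3 ≤ k := by
  classical
  have hP : ∀ m, Pk G m := by
    intro m
    induction m using Nat.strong_induction_on with
    | _ m IH => exact pstep hG hH m IH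
  simp only [List.nodup_cons, List.mem_cons, List.mem_singleton, List.not_mem_nil,
    or_false, not_or, List.nodup_nil, and_true] at hnd
  exact hP k z x0 x1 x2 x3 hnd.1.2.1 hnd.2.1.2 h01 h12 h23 h30 h02 h13 hz0 hz1
end

section
/- Let G be a connected hole-free graph and uv a good pair in G. Then for every vertex z not in the line generated by u and v, there exists a common neighbour c of u and v such that c lies on a shortest path from z to u and on a shortest path from z to v. -/
open SimpleGraph

variable {V : Type*}

/-!
Let `a`, `b`, `c` be the distances from `z` to `u`, `v` and to the middle vertex `c₀` of the good
pair. For an edge `x y`, a vertex lies on `line x y` exactly when it is not equidistant from `x`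
and `y`, so `line u c₀ = line c₀ v` says that `a = c ↔ c = b`. Together with `z ∉ line u v` this
leaves two cases: `c + 1 = a = b`, where `c₀` itself is the required vertex, and `a = b ≤ c`.
In the second case take neighbours `P` of `u` and `Q` of `v` one step closer to `z`. If neither
is a common neighbour of `u` and `v`, the good-pair condition keeps both away from `c₀`, and
`P u c₀ v Q` is an induced path (were `P` and `Q` adjacent, they would close a 5-hole) whose
ends lie at one distance from `z` and whose inner vertices lie strictly farther. Moving both ends
one step towards `z` either closes a hole or gives a longer path of the same kind one level
lower, which is impossible once the ends reach `z`.
-/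

namespace SimpleGraph

variable {G : SimpleGraph V} {n : ℕ}

lemma cycleGraph_adj_iff_val_s10 {i j : Fin (n + 2)} :
    (cycleGraph (n + 2)).Adj i j ↔ i.val + 1 = j.val ∨ j.val + 1 = i.val ∨
      (i.val = 0 ∧ j.val = n + 1) ∨ (j.val = 0 ∧ i.val = n + 1) := by
  have mod_eq_one {s : ℕ} (hs : s < 2 * (n + 2)) : s % (n + 2) = 1 ↔ s = 1 ∨ s = n + 3 := by
    rcases Nat.lt_or_ge s (n + 2) with h | h
    · rw [Nat.mod_eq_of_lt h]; omega
    · rw [Nat.mod_eq_sub_mod h, Nat.mod_eq_of_lt (by omega)]; omega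
  rw [cycleGraph_adj', Fin.sub_def, Fin.sub_def, mod_eq_one (by omega), mod_eq_one (by omega)]
  omega

lemma exists_pathGraph_snoc (e : pathGraph (n + 1) ↪g G) {w : V} (hne : ∀ i, e i ≠ w)
    (hadj : ∀ i, G.Adj (e i) w ↔ i = Fin.last n) :
    ∃ e' : pathGraph (n + 2) ↪g G, ⇑e' = Fin.snoc (α := fun _ ↦ V) e w := by
  have hadj' (i) : G.Adj w (e i) ↔ i = Fin.last n := G.adj_comm _ _ |>.trans (hadj i)
  refine ⟨⟨⟨Fin.snoc (α := fun _ ↦ V) e w, fun i j h ↦ ?_⟩, @fun i j ↦ ?_⟩, rfl⟩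
  · induction i using Fin.lastCases <;> induction j using Fin.lastCases <;>
      simp_all [(hne _).symm]
  · change G.Adj (Fin.snoc (α := fun _ ↦ V) e w i) (Fin.snoc (α := fun _ ↦ V) e w j) ↔ _
    induction i using Fin.lastCases <;> induction j using Fin.lastCases <;>
      simp only [Fin.snoc_last, Fin.snoc_castSucc, e.map_adj_iff, hadj, hadj', G.irrefl, false_iff,
        pathGraph_adj, Fin.ext_iff, Fin.val_last, Fin.val_castSucc] <;> omega

lemma exists_pathGraph_cons (e : pathGraph (n + 1) ↪g G) {w : V} (hne : ∀ i, e i ≠ w)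
    (hadj : ∀ i, G.Adj (e i) w ↔ i = 0) :
    ∃ e' : pathGraph (n + 2) ↪g G, ⇑e' = Fin.cons (α := fun _ ↦ V) w e := by
  have hadj' (i) : G.Adj w (e i) ↔ i = 0 := G.adj_comm _ _ |>.trans (hadj i)
  refine ⟨⟨⟨Fin.cons (α := fun _ ↦ V) w e, fun i j h ↦ ?_⟩, @fun i j ↦ ?_⟩, rfl⟩
  · induction i using Fin.cases <;> induction j using Fin.cases <;>
      simp_all [(hne _).symm]
  · change G.Adj (Fin.cons (α := fun _ ↦ V) w e i) (Fin.cons (α := fun _ ↦ V) w e j) ↔ _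
    induction i using Fin.cases <;> induction j using Fin.cases <;>
      simp only [Fin.cons_zero, Fin.cons_succ, e.map_adj_iff, hadj, hadj', G.irrefl, false_iff,
        pathGraph_adj, Fin.ext_iff, Fin.val_zero, Fin.val_succ] <;> omega

lemma nonempty_cycleGraph_embedding_of_path (e : pathGraph (n + 1) ↪g G) {w : V}
    (hne : ∀ i, e i ≠ w)
    (hadj : ∀ i, G.Adj (e i) w ↔ i = 0 ∨ i = Fin.last n) :
    Nonempty (cycleGraph (n + 2) ↪g G) := by
  have hadj' (i) : G.Adj w (e i) ↔ i = 0 ∨ i = Fin.last n := G.adj_comm _ _ |>.trans (hadj i)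
  refine ⟨⟨⟨Fin.snoc (α := fun _ ↦ V) e w, fun i j h ↦ ?_⟩, @fun i j ↦ ?_⟩⟩
  · induction i using Fin.lastCases <;> induction j using Fin.lastCases <;>
      simp_all [(hne _).symm]
  · change G.Adj (Fin.snoc (α := fun _ ↦ V) e w i) (Fin.snoc (α := fun _ ↦ V) e w j) ↔ _
    induction i using Fin.lastCases <;> induction j using Fin.lastCases <;>
      simp only [Fin.snoc_last, Fin.snoc_castSucc, e.map_adj_iff, hadj, hadj', G.irrefl, false_iff,
        pathGraph_adj, cycleGraph_adj_iff_val_s10, Fin.ext_iff, Fin.val_last, Fin.val_castSucc,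
        Fin.val_zero, and_true] <;> omega

lemma exists_adj_dist_eq_of_dist_eq_succ {z x : V} {k : ℕ} (h : G.dist z x = k + 1) :
    ∃ y, G.Adj y x ∧ G.dist z y = k := by
  rw [dist_comm] at h
  obtain ⟨p, hp⟩ := exists_walk_of_dist_ne_zero (G := G) (u := x) (v := z) (by omega)
  have hnil : ¬ p.Nil := by rw [← Walk.length_eq_zero_iff]; omega
  have hle : G.dist z p.snd ≤ k := by
    have := dist_le p.tail
    rw [Walk.length_tail, hp, h, dist_comm] at this
    omega
  refine ⟨p.snd, (p.adj_snd hnil).symm, ?_⟩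
  rw [dist_comm] at h
  rcases (p.adj_snd hnil).diff_dist_adj (u := z) with h' | h' | h' <;> omega

lemma not_adj_of_dist_add_two_le {z x y : V} (h : G.dist z x + 2 ≤ G.dist z y) :
    ¬ G.Adj x y := fun hxy ↦ by
  rcases hxy.diff_dist_adj (u := z) with h' | h' | h' <;> omega

lemma exists_pathGraph_three {a b c : V} (hab : G.Adj a b) (hbc : G.Adj b c) (hac : ¬ G.Adj a c)
    (hne : a ≠ c) : ∃ e : pathGraph 3 ↪g G, ⇑e = ![a, b, c] := by
  refine ⟨⟨⟨![a, b, c], fun i j h ↦ ?_⟩, @fun i j ↦ ?_⟩, rfl⟩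
  · fin_cases i <;> fin_cases j <;> simp_all [hab.ne, hbc.ne, hab.ne.symm, hbc.ne.symm, hne.symm]
  · change G.Adj (![a, b, c] i) (![a, b, c] j) ↔ _
    have hca : ¬ G.Adj c a := fun h ↦ hac h.symm
    fin_cases i <;> fin_cases j <;> simp [pathGraph_adj, hab, hbc, hac, hab.symm, hbc.symm, hca]

end SimpleGraph

open SimpleGraph

section Line

variable {G : SimpleGraph V} {x y u c v w : V}

lemma mem_line_iff_of_adj (h : G.Adj x y) : w ∈ line G x y ↔ G.dist w x ≠ G.dist w y := by
  have hxy : G.dist x y = 1 := dist_eq_one_iff_adj.mpr h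
  simp only [line, interval, Set.mem_ofPred_eq, hxy, G.dist_comm (u := x) (v := w),
    G.dist_comm (u := y) (v := w)]
  rcases h.diff_dist_adj (u := w) with h' | h' | h' <;> omega

lemma adj_iff_adj_of_line_eq (huc : G.Adj u c) (hcv : G.Adj c v)
    (hline : line G u c = line G c v) (hw : G.Adj w c) : G.Adj w u ↔ G.Adj w v := by
  have key := Set.ext_iff.mp hline w
  rw [mem_line_iff_of_adj huc, mem_line_iff_of_adj hcv, not_iff_not] at key
  rw [← dist_eq_one_iff_adj, ← dist_eq_one_iff_adj, ← dist_eq_one_iff_adj.mpr hw, key, eq_comm]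

end Line

section HoleFree

variable {G : SimpleGraph V} {m : ℕ}

lemma HoleFree.exists_inner_adj (hH : HoleFree G) (e : pathGraph (m + 1) ↪g G) (hm : 3 ≤ m)
    {w : V} (hw : ∀ i, e i ≠ w) (h0 : G.Adj (e 0) w) (hl : G.Adj (e (Fin.last m)) w) :
    ∃ i, i ≠ 0 ∧ i ≠ Fin.last m ∧ G.Adj (e i) w := by
  by_contra! hinner
  have hadj (i) : G.Adj (e i) w ↔ i = 0 ∨ i = Fin.last m := by
    refine ⟨fun h ↦ ?_, by rintro (rfl | rfl) <;> assumption⟩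
    by_contra! hi
    exact hinner i hi.1 hi.2 h
  obtain ⟨c⟩ := nonempty_cycleGraph_embedding_of_path e hw hadj
  exact (hH (m + 2) (by omega)).false c

lemma HoleFree.adj_iff_eq_of_adj_end (hH : HoleFree G) (e : pathGraph (m + 1) ↪g G)
    (hm : 3 ≤ m) {w : V} (hw : ∀ i, e i ≠ w)
    (hinner : ∀ i, i ≠ 0 → i ≠ Fin.last m → ¬ G.Adj (e i) w) {j : Fin (m + 1)}
    (hj : j = 0 ∨ j = Fin.last m) (hadj : G.Adj (e j) w) (i : Fin (m + 1)) :
    G.Adj (e i) w ↔ i = j := by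
  refine ⟨fun h ↦ ?_, by rintro rfl; exact hadj⟩
  by_contra hij
  by_cases hi : i ≠ 0 ∧ i ≠ Fin.last m
  · exact hinner i hi.1 hi.2 h
  have hends : G.Adj (e 0) w ∧ G.Adj (e (Fin.last m)) w := by
    rw [not_and_or, not_not, not_not] at hi
    rcases hj with rfl | rfl <;> rcases hi with rfl | rfl <;>
      first | exact absurd rfl hij | exact ⟨hadj, h⟩ | exact ⟨h, hadj⟩
  obtain ⟨i', hi'0, hi'l, hi'⟩ := hH.exists_inner_adj e hm hw hends.1 hends.2
  exact hinner i' hi'0 hi'l hi'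

lemma HoleFree.exists_pathGraph_extend (hH : HoleFree G) (e : pathGraph (m + 1) ↪g G)
    (hm : 2 ≤ m) {x y : V} (hx : ∀ i, e i ≠ x) (hy : ∀ i, e i ≠ y)
    (hxe : ∀ i, G.Adj (e i) x ↔ i = 0) (hye : ∀ i, G.Adj (e i) y ↔ i = Fin.last m) :
    ∃ e' : pathGraph (m + 3) ↪g G, e' 0 = x ∧ e' (Fin.last _) = y ∧
      ∀ j, j ≠ 0 → j ≠ Fin.last _ → e' j ∈ Set.range e := by
  obtain ⟨ex, hex⟩ := exists_pathGraph_cons e hx hxe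
  have hxy : x ≠ y := by
    rintro rfl
    have := (hye 0).mp ((hxe 0).mpr rfl)
    simp only [Fin.ext_iff, Fin.val_zero, Fin.val_last] at this
    omega
  have hexy : ∀ i, ex i ≠ y := Fin.forall_fin_succ.2 ⟨by simpa [hex], by simpa [hex]⟩
  have hexy_adj (i : Fin (m + 1)) : G.Adj (ex i.succ) y ↔ i = Fin.last m := by
    rw [hex, Fin.cons_succ, hye]
  have hey : ¬ G.Adj x y := by
    intro hadj
    obtain ⟨i, hi0, hil, hi⟩ := hH.exists_inner_adj ex (by omega) hexy (by simpa [hex])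
      (by rw [← Fin.succ_last, hexy_adj])
    obtain ⟨i, rfl⟩ := Fin.exists_succ_eq.2 hi0
    exact hil (by rw [(hexy_adj i).1 hi, Fin.succ_last])
  obtain ⟨e', he'⟩ := exists_pathGraph_snoc ex hexy <| Fin.forall_fin_succ.2
    ⟨by simpa [hex] using hey, fun i ↦ by rw [hexy_adj, ← Fin.succ_last, Fin.succ_inj]⟩
  refine ⟨e', by simp [he', hex], by simp [he'], fun j hj0 hjl ↦ ?_⟩
  induction j using Fin.lastCases with
  | last => exact absurd rfl hjl
  | cast j =>
    induction j using Fin.cases with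
    | zero => exact absurd rfl hj0
    | succ i => exact ⟨i, by rw [he', Fin.snoc_castSucc, hex, Fin.cons_succ]⟩

theorem HoleFree.exists_inner_dist_le (hH : HoleFree G) (hG : G.Connected) (z : V) {k : ℕ}
    (e : pathGraph (m + 1) ↪g G) (hm : 3 ≤ m) (h0 : G.dist z (e 0) = k)
    (hl : G.dist z (e (Fin.last m)) = k) :
    ∃ i, i ≠ 0 ∧ i ≠ Fin.last m ∧ G.dist z (e i) ≤ k := by
  induction k generalizing m with
  | zero =>
    have h := e.injective ((hG.dist_eq_zero_iff.1 h0).symm.trans (hG.dist_eq_zero_iff.1 hl))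
    simp only [Fin.ext_iff, Fin.val_zero, Fin.val_last] at h
    omega
  | succ k ih =>
    by_contra! hfar
    have hlevel (i) : k + 1 ≤ G.dist z (e i) := by
      by_cases hi0 : i = 0
      · rw [hi0, h0]
      by_cases hil : i = Fin.last m
      · rw [hil, hl]
      exact (hfar i hi0 hil).le
    obtain ⟨x, hx0, hx⟩ := exists_adj_dist_eq_of_dist_eq_succ h0
    obtain ⟨y, hyl, hy⟩ := exists_adj_dist_eq_of_dist_eq_succ hl
    have hxe (i) : e i ≠ x := ne_of_apply_ne (G.dist z) (by have := hlevel i; omega)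
    have hye (i) : e i ≠ y := ne_of_apply_ne (G.dist z) (by have := hlevel i; omega)
    have hx_adj := hH.adj_iff_eq_of_adj_end e hm hxe
      (fun i hi0 hil h ↦ not_adj_of_dist_add_two_le (z := z) (by have := hfar i hi0 hil; omega)
        h.symm) (Or.inl rfl) hx0.symm
    have hy_adj := hH.adj_iff_eq_of_adj_end e hm hye
      (fun i hi0 hil h ↦ not_adj_of_dist_add_two_le (z := z) (by have := hfar i hi0 hil; omega)
        h.symm) (Or.inr rfl) hyl.symm
    obtain ⟨e', he'0, he'l, he'e⟩ :=
      hH.exists_pathGraph_extend e (by omega) hxe hye hx_adj hy_adj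
    obtain ⟨j, hj0, hjl, hj⟩ := ih e' (by omega) (he'0 ▸ hx) (he'l ▸ hy)
    obtain ⟨i, hi⟩ := he'e j hj0 hjl
    have := hlevel i
    rw [hi] at this
    omega

lemma HoleFree.exists_common_adj_mem_interval (hH : HoleFree G) (hG : G.Connected)
    {u c v z : V} {k : ℕ} (huc : G.Adj u c) (hcv : G.Adj c v) (huv : G.dist u v = 2)
    (hline : line G u c = line G c v) (hu : G.dist z u = k + 1) (hv : G.dist z v = k + 1)
    (hc : k + 1 ≤ G.dist z c) :
    ∃ w, G.Adj u w ∧ G.Adj w v ∧ w ∈ interval G z u ∧ w ∈ interval G z v := by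
  have mem_interval {w x : V} (hwx : G.Adj w x) (hw : G.dist z w = k)
      (hx : G.dist z x = k + 1) : w ∈ interval G z x := by
    rw [interval, Set.mem_ofPred_eq, hx, hw, dist_eq_one_iff_adj.mpr hwx]
  obtain ⟨P, hPu, hP⟩ := exists_adj_dist_eq_of_dist_eq_succ hu
  obtain ⟨Q, hQv, hQ⟩ := exists_adj_dist_eq_of_dist_eq_succ hv
  by_cases hPv : G.Adj v P
  · exact ⟨P, hPu.symm, hPv.symm, mem_interval hPu hP hu, mem_interval hPv.symm hP hv⟩
  by_cases hQu : G.Adj u Q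
  · exact ⟨Q, hQu, hQv, mem_interval hQu.symm hQ hu, mem_interval hQv hQ hv⟩
  exfalso
  have hPc : ¬ G.Adj c P := fun h ↦ hPv ((adj_iff_adj_of_line_eq huc hcv hline h.symm).1 hPu).symm
  have hQc : ¬ G.Adj c Q := fun h ↦ hQu ((adj_iff_adj_of_line_eq huc hcv hline h.symm).2 hQv).symm
  have hne : u ≠ v := by rintro rfl; simp at huv
  have hnadj : ¬ G.Adj u v := fun h ↦ by simp [dist_eq_one_iff_adj.mpr h] at huv
  obtain ⟨e, he⟩ := exists_pathGraph_three huc hcv hnadj hne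
  have hlevel (i) : k + 1 ≤ G.dist z (e i) := by
    rw [he]; fin_cases i <;> simp [hu, hv, hc]
  have hPe (i) : e i ≠ P := ne_of_apply_ne (G.dist z) (by have := hlevel i; omega)
  have hQe (i) : e i ≠ Q := ne_of_apply_ne (G.dist z) (by have := hlevel i; omega)
  have hP_adj (i) : G.Adj (e i) P ↔ i = 0 := by
    rw [he]; fin_cases i <;> simp [hPu.symm, hPc, hPv]
  have hQ_adj (i) : G.Adj (e i) Q ↔ i = Fin.last 2 := by
    rw [he]; fin_cases i <;> simp [hQv.symm, hQc, hQu]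
  obtain ⟨e', he'0, he'l, he'e⟩ := hH.exists_pathGraph_extend e le_rfl hPe hQe hP_adj hQ_adj
  obtain ⟨j, hj0, hjl, hj⟩ := hH.exists_inner_dist_le hG z e' (by norm_num) (he'0 ▸ hP) (he'l ▸ hQ)
  obtain ⟨i, hi⟩ := he'e j hj0 hjl
  have := hlevel i
  rw [hi] at this
  omega

end HoleFree

theorem stmt10 (G : SimpleGraph V) (hG : G.Connected) (hH : HoleFree G)
    (u v z : V) (huv : GoodPair G u v) (hz : z ∉ line G u v) :
    ∃ c : V, G.Adj u c ∧ G.Adj c v ∧ c ∈ interval G z u ∧ c ∈ interval G z v := by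
  obtain ⟨huv, c, huc, hcv, hline⟩ := huv
  have hequi := Set.ext_iff.mp hline z
  rw [mem_line_iff_of_adj huc, mem_line_iff_of_adj hcv, not_iff_not] at hequi
  simp only [line, interval, Set.mem_ofPred_eq, not_or, huv, G.dist_comm (u := u) (v := z),
    G.dist_comm (u := v) (v := z)] at hz
  have hcu := huc.diff_dist_adj (u := z)
  have hvc := hcv.diff_dist_adj (u := z)
  by_cases hc : G.dist z c + 1 = G.dist z u ∧ G.dist z c + 1 = G.dist z v
  · refine ⟨c, huc, hcv, ?_, ?_⟩ <;>
      simp only [interval, Set.mem_ofPred_eq, dist_eq_one_iff_adj.mpr huc.symm,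
        dist_eq_one_iff_adj.mpr hcv] <;> omega
  have ha0 : G.dist z u ≠ 0 := fun h ↦ by
    rw [hG.dist_eq_zero_iff.1 h] at hequi hz
    simp_all
  obtain ⟨k, hk⟩ := Nat.exists_eq_succ_of_ne_zero ha0
  exact hH.exists_common_adj_mem_interval hG huc hcv huv hline hk (by omega) (by omega)
end

section
/- Let G be a connected {house, hole}-free graph and let uv and xy be good pairs generating the same line. If uv and xy are γ-related, i.e., (u,x,v,y) is a parallelogram and line(u,v) = I(u,v) = I(x,y) = line(x,y), then {u,v,x,y} is a C_4-module of G: it induces a 4-cycle and every other vertex is adjacent to all four or to none of them. -/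
open SimpleGraph

variable {V : Type*}

/- ------------------ auxiliary lemmas ------------------ -/

lemma mem_interval' {G : SimpleGraph V} {a b z : V} :
    z ∈ interval G a b ↔ G.dist a b = G.dist a z + G.dist z b := Iff.rfl

lemma interval_comm' (G : SimpleGraph V) (a b : V) : interval G a b = interval G b a := by
  ext z; simp only [mem_interval']
  rw [show G.dist b a = G.dist a b from dist_comm, show G.dist b z = G.dist z b from dist_comm,
      show G.dist z a = G.dist a z from dist_comm]
  omega

lemma line_comm' (G : SimpleGraph V) (a b : V) : line G a b = line G b a := by
  ext z
  simp only [line, mem_interval', Set.mem_setOf_eq]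
  rw [show G.dist b a = G.dist a b from dist_comm, show G.dist b z = G.dist z b from dist_comm,
      show G.dist z a = G.dist a z from dist_comm]
  omega

lemma adj_of_interval (G : SimpleGraph V) (hG : G.Connected) {a b z : V}
    (hd : G.dist a b = 2) (hz : z ∈ interval G a b) (h1 : z ≠ a) (h2 : z ≠ b) :
    G.Adj a z ∧ G.Adj z b := by
  have hz' : G.dist a b = G.dist a z + G.dist z b := hz
  have p1 : 0 < G.dist a z := by rw [dist_comm]; exact hG.pos_dist_of_ne h1
  have p2 : 0 < G.dist z b := hG.pos_dist_of_ne h2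
  constructor <;> rw [← dist_eq_one_iff_adj] <;> omega

instance : DecidableRel house.Adj := by
  unfold house
  intro a b
  rw [fromEdgeSet_adj]
  infer_instance

/-- Build a house embedding from an explicit configuration: 5-cycle
v0-v1-v2-v3-v4-v0 with chord v1-v4 and no other edges. -/
lemma house_embed (G : SimpleGraph V) (v0 v1 v2 v3 v4 : V)
    (e01 : G.Adj v0 v1) (e12 : G.Adj v1 v2) (e23 : G.Adj v2 v3)
    (e34 : G.Adj v3 v4) (e40 : G.Adj v4 v0) (e14 : G.Adj v1 v4)
    (n02 : ¬ G.Adj v0 v2) (n03 : ¬ G.Adj v0 v3) (n13 : ¬ G.Adj v1 v3)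
    (n24 : ¬ G.Adj v2 v4)
    (d02 : v0 ≠ v2) (d03 : v0 ≠ v3) (d13 : v1 ≠ v3) (d24 : v2 ≠ v4) :
    Nonempty (house ↪g G) := by
  refine ⟨⟨⟨![v0,v1,v2,v3,v4], ?_⟩, ?_⟩⟩
  · intro a b hab
    fin_cases a <;> fin_cases b <;>
      first
        | rfl
        | exact absurd hab e01.ne | exact absurd hab e01.ne'
        | exact absurd hab e12.ne | exact absurd hab e12.ne'
        | exact absurd hab e23.ne | exact absurd hab e23.ne'
        | exact absurd hab e34.ne | exact absurd hab e34.ne'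
        | exact absurd hab e40.ne | exact absurd hab e40.ne'
        | exact absurd hab e14.ne | exact absurd hab e14.ne'
        | exact absurd hab d02 | exact absurd hab d02.symm
        | exact absurd hab d03 | exact absurd hab d03.symm
        | exact absurd hab d13 | exact absurd hab d13.symm
        | exact absurd hab d24 | exact absurd hab d24.symm
  · intro a b
    fin_cases a <;> fin_cases b <;>
      first
        | exact iff_of_false (G.irrefl) (by decide)
        | exact iff_of_true e01 (by decide) | exact iff_of_true e01.symm (by decide)
        | exact iff_of_true e12 (by decide) | exact iff_of_true e12.symm (by decide)
        | exact iff_of_true e23 (by decide) | exact iff_of_true e23.symm (by decide)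
        | exact iff_of_true e34 (by decide) | exact iff_of_true e34.symm (by decide)
        | exact iff_of_true e40 (by decide) | exact iff_of_true e40.symm (by decide)
        | exact iff_of_true e14 (by decide) | exact iff_of_true e14.symm (by decide)
        | exact iff_of_false n02 (by decide) | exact iff_of_false (fun h => n02 h.symm) (by decide)
        | exact iff_of_false n03 (by decide) | exact iff_of_false (fun h => n03 h.symm) (by decide)
        | exact iff_of_false n13 (by decide) | exact iff_of_false (fun h => n13 h.symm) (by decide)
        | exact iff_of_false n24 (by decide) | exact iff_of_false (fun h => n24 h.symm) (by decide)

/-- If `z` is adjacent to `u` but not `v` (where `dist u v = 2`, with a good-pair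
witness `c`, and `line u v = interval u v`), we get a contradiction. -/
lemma one_nbr (G : SimpleGraph V) (hG : G.Connected) {u v c z : V}
    (hd : G.dist u v = 2) (hc1 : G.Adj u c) (hc2 : G.Adj c v)
    (hlc : line G u c = line G c v) (hl : line G u v = interval G u v)
    (hzu : G.Adj z u) (hzv : ¬ G.Adj z v) (hne : z ≠ v) : False := by
  have dzu : G.dist z u = 1 := dist_eq_one_iff_adj.mpr hzu
  have duz : G.dist u z = 1 := dist_eq_one_iff_adj.mpr hzu.symm
  have duc : G.dist u c = 1 := dist_eq_one_iff_adj.mpr hc1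
  have dcv : G.dist c v = 1 := dist_eq_one_iff_adj.mpr hc2
  have dzv3 : G.dist z v ≤ 3 := by
    have := hG.dist_triangle (u := z) (v := u) (w := v); omega
  have dzv2 : 2 ≤ G.dist z v := by
    have h0 : 0 < G.dist z v := hG.pos_dist_of_ne hne
    have h1 : G.dist z v ≠ 1 := fun h => hzv (dist_eq_one_iff_adj.mp h)
    omega
  have dzv : G.dist z v = 2 := by
    rcases Nat.lt_or_ge (G.dist z v) 3 with h | h
    · omega
    · exfalso
      have hmem : z ∈ line G u v := Or.inr (Or.inl (by rw [mem_interval']; omega))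
      rw [hl, mem_interval'] at hmem
      omega
  have hcz : c ≠ z := fun h => hzv (h ▸ hc2)
  have dzc2 : G.dist z c ≤ 2 := by
    have := hG.dist_triangle (u := z) (v := u) (w := c); omega
  have dzc1 : 1 ≤ G.dist z c := by
    have := hG.pos_dist_of_ne (Ne.symm hcz); omega
  have dcz : G.dist c z = G.dist z c := dist_comm
  have dvz : G.dist v z = G.dist z v := dist_comm
  have duz' : G.dist u z = G.dist z u := dist_comm
  rcases Nat.eq_or_lt_of_le dzc1 with h1 | h2
  · -- dist z c = 1
    have hmem : z ∈ line G c v := Or.inr (Or.inl (by rw [mem_interval']; omega))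
    rw [← hlc] at hmem
    rcases hmem with h | h | h <;> rw [mem_interval'] at h <;> omega
  · -- dist z c = 2
    have hmem : z ∈ line G u c := Or.inr (Or.inl (by rw [mem_interval']; omega))
    rw [hlc] at hmem
    rcases hmem with h | h | h <;> rw [mem_interval'] at h <;> omega

theorem stmt11 (G : SimpleGraph V) (hG : G.Connected) (hH : HHFree G)
    (u v x y : V) (hgp1 : GoodPair G u v) (hgp2 : GoodPair G x y)
    (hnd : ([u, x, v, y] : List V).Nodup)
    (p1 : x ∈ interval G u v) (p2 : v ∈ interval G x y)
    (p3 : y ∈ interval G v u) (p4 : u ∈ interval G y x)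
    (hl1 : line G u v = interval G u v) (hl2 : line G x y = interval G x y)
    (hl3 : interval G u v = interval G x y)
    (heq : line G u v = line G x y) :
    G.Adj u x ∧ G.Adj x v ∧ G.Adj v y ∧ G.Adj y u ∧
    ¬ G.Adj u v ∧ ¬ G.Adj x y ∧
    ∀ z : V, z ∉ ({u, v, x, y} : Set V) →
      ((G.Adj z u ∧ G.Adj z v ∧ G.Adj z x ∧ G.Adj z y) ∨
       (¬ G.Adj z u ∧ ¬ G.Adj z v ∧ ¬ G.Adj z x ∧ ¬ G.Adj z y)) := by
  obtain ⟨hd1, c1, hc11, hc12, hc13⟩ := hgp1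
  obtain ⟨hd2, c2, hc21, hc22, hc23⟩ := hgp2
  simp only [List.nodup_cons, List.mem_cons, List.not_mem_nil, or_false,
    List.mem_singleton, not_or, List.nodup_nil, and_true] at hnd
  obtain ⟨⟨hux', huv', huy'⟩, ⟨hxv', hxy'⟩, hvy', -⟩ := hnd
  have hdvu : G.dist v u = 2 := by rw [dist_comm]; exact hd1
  have hdyx : G.dist y x = 2 := by rw [dist_comm]; exact hd2
  obtain ⟨hux, hxv⟩ := adj_of_interval G hG hd1 p1 (Ne.symm hux') hxv'
  obtain ⟨hvy, hyu⟩ := adj_of_interval G hG hdvu p3 (Ne.symm hvy') (Ne.symm huy')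
  have hnuv : ¬ G.Adj u v := fun h => by
    have := dist_eq_one_iff_adj.mpr h; omega
  have hnxy : ¬ G.Adj x y := fun h => by
    have := dist_eq_one_iff_adj.mpr h; omega
  refine ⟨hux, hxv, hvy, hyu, hnuv, hnxy, ?_⟩
  intro z hz
  simp only [Set.mem_insert_iff, Set.mem_singleton_iff, not_or] at hz
  obtain ⟨hzu', hzv', hzx', hzy'⟩ := hz
  -- if z is adjacent to both of one diagonal pair, it is adjacent to all four
  have habuv : G.Adj z u → G.Adj z v → G.Adj z x ∧ G.Adj z y := by
    intro h1 h2
    have hm : z ∈ interval G u v := by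
      rw [mem_interval', dist_eq_one_iff_adj.mpr h1.symm, dist_eq_one_iff_adj.mpr h2, hd1]
    rw [hl3] at hm
    obtain ⟨ha, hb⟩ := adj_of_interval G hG hd2 hm hzx' hzy'
    exact ⟨ha.symm, hb⟩
  have habxy : G.Adj z x → G.Adj z y → G.Adj z u ∧ G.Adj z v := by
    intro h1 h2
    have hm : z ∈ interval G x y := by
      rw [mem_interval', dist_eq_one_iff_adj.mpr h1.symm, dist_eq_one_iff_adj.mpr h2, hd2]
    rw [← hl3] at hm
    obtain ⟨ha, hb⟩ := adj_of_interval G hG hd1 hm hzu' hzv'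
    exact ⟨ha.symm, hb⟩
  -- good-pair data for the reversed pairs
  have hl1' : line G v u = interval G v u := by
    rw [line_comm', interval_comm', hl1]
  have hl2' : line G y x = interval G y x := by
    rw [line_comm', interval_comm', hl2]
  have hc13' : line G v c1 = line G c1 u := by
    rw [line_comm', ← hc13, line_comm']
  have hc23' : line G y c2 = line G c2 x := by
    rw [line_comm', ← hc23, line_comm']
  by_cases au : G.Adj z u
  · by_cases av : G.Adj z v
    · obtain ⟨ax, ay⟩ := habuv au av
      exact Or.inl ⟨au, av, ax, ay⟩
    · by_cases ax : G.Adj z x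
      · -- house on z,u,y,v,x with chord u-x
        obtain ⟨e⟩ := house_embed G z u y v x au hyu.symm hvy.symm hxv.symm ax.symm hux
          (by by_cases ay : G.Adj z y
              · exact fun _ => av (habxy ax ay).2
              · exact ay)
          av hnuv (fun h => hnxy h.symm) hzy' hzv' huv' (Ne.symm hxy')
        exact (hH.1.false e).elim
      · by_cases ay : G.Adj z y
        · -- house on z,u,x,v,y with chord u-y
          obtain ⟨e⟩ := house_embed G z u x v y au hux hxv hvy ay.symm hyu.symm
            ax av hnuv hnxy hzx' hzv' huv' hxy'
          exact (hH.1.false e).elim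
        · exact (one_nbr G hG hd1 hc11 hc12 hc13 hl1 au av hzv').elim
  · by_cases av : G.Adj z v
    · by_cases ax : G.Adj z x
      · -- house on z,x,u,y,v with chord x-v
        obtain ⟨e⟩ := house_embed G z x u y v ax hux.symm hyu.symm hvy.symm av.symm hxv
          au
          (by by_cases ay : G.Adj z y
              · exact fun _ => au (habxy ax ay).1
              · exact ay)
          hnxy hnuv hzu' hzy' hxy' huv'
        exact (hH.1.false e).elim
      · by_cases ay : G.Adj z y
        · -- house on z,v,x,u,y with chord v-y
          obtain ⟨e⟩ := house_embed G z v x u y av hxv.symm hux.symm hyu.symm ay.symm hvy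
            ax au (fun h => hnuv h.symm) hnxy hzx' hzu' (Ne.symm huv') hxy'
          exact (hH.1.false e).elim
        · exact (one_nbr G hG hdvu hc12.symm hc11.symm hc13' hl1' av au hzu').elim
    · by_cases ax : G.Adj z x
      · by_cases ay : G.Adj z y
        · exact absurd (habxy ax ay).1 au
        · exact (one_nbr G hG hd2 hc21 hc22 hc23 hl2 ax ay hzy').elim
      · by_cases ay : G.Adj z y
        · exact (one_nbr G hG hdyx hc22.symm hc21.symm hc23' hl2' ay ax hzx').elim
        · exact Or.inr ⟨au, av, ax, ay⟩
end

section
/- Let G be a connected {house, hole}-free graph with no universal edge. Then every edge of G lies in a triangle. -/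
open SimpleGraph

variable {V : Type*}

/-!
If the edge `uv` lies in no triangle, no vertex `z` is equidistant from `u` and `v`; as `d(u,z)`
and `d(v,z)` differ by at most one, every `z` then lies on the line of `uv`. Suppose `z` is
equidistant, at minimal distance `k`. Then `k ≥ 2`; take geodesics `u = x₀, …, x_k = z` and
`v = y₀, …, y_k = z`. Minimality gives `d(v, x_i) = d(u, y_i) = i + 1` for `i < k`, so the only
chords of the closed walk `x₀ … x_k y_{k-1} … y₀` are rungs `x_i y_i`. A rung with
`0 < i < k - 1` cuts off the same configuration with smaller `k`. Without such rungs, either the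
walk is a hole of length `2k + 1`, or `x_{k-1} y_{k-1}` is a rung and `x₀ … x_{k-1} y_{k-1} … y₀`
is a hole of length `2k` (if `k ≥ 3`) or a square that `z` completes to a house (if `k = 2`).
-/

section

variable {G : SimpleGraph V}

lemma house_adj_iff (a b : Fin 5) :
    house.Adj a b ↔
      s(a, b) ∈ ({s(0, 1), s(1, 2), s(2, 3), s(3, 4), s(4, 0), s(1, 4)} : Finset _) := by
  simp only [house, fromEdgeSet_adj, Set.mem_insert_iff, Set.mem_singleton_iff, Finset.mem_insert,
    Finset.mem_singleton]
  fin_cases a <;> fin_cases b <;> decide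

lemma house_eq_of_neighbors (i j : Fin 5) (hn : ∀ r, house.Adj r i ↔ house.Adj r j)
    (hij : ¬ house.Adj i j) : i = j := by
  revert i j
  simp only [house_adj_iff]
  decide

lemma nonempty_house_embedding_s16 {a₀ a₁ a₂ a₃ a₄ : V}
    (h01 : G.Adj a₀ a₁) (h12 : G.Adj a₁ a₂) (h23 : G.Adj a₂ a₃) (h34 : G.Adj a₃ a₄)
    (h40 : G.Adj a₄ a₀) (h14 : G.Adj a₁ a₄) (n02 : ¬ G.Adj a₀ a₂) (n03 : ¬ G.Adj a₀ a₃)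
    (n13 : ¬ G.Adj a₁ a₃) (n24 : ¬ G.Adj a₂ a₄) : Nonempty (house ↪g G) := by
  let f : Fin 5 → V := ![a₀, a₁, a₂, a₃, a₄]
  have hf : ∀ i j, G.Adj (f i) (f j) ↔ house.Adj i j := by
    intro i j
    rw [house_adj_iff]
    fin_cases i <;> fin_cases j <;>
      simp [f, h01, h12, h23, h34, h40, h14, h01.symm, h12.symm, h23.symm, h34.symm, h40.symm,
        h14.symm, n02, n03, n13, n24, G.adj_comm a₂ a₀, G.adj_comm a₃ a₀,
        G.adj_comm a₃ a₁, G.adj_comm a₄ a₂]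
  refine ⟨⟨⟨f, fun i j hij => house_eq_of_neighbors i j (fun r => ?_) ?_⟩, hf _ _⟩⟩
  · rw [← hf, ← hf, hij]
  · rw [← hf, hij]; exact G.irrefl

lemma cycleGraph_adj_of_lt {n : ℕ} {a b : Fin n} (hab : a < b) :
    (cycleGraph n).Adj a b ↔ b.val = a.val + 1 ∨ (a.val = 0 ∧ b.val + 1 = n) := by
  rw [cycleGraph_adj', Fin.coe_sub_iff_lt.mpr hab, Fin.sub_val_of_le hab.le]
  have := b.isLt
  rw [Fin.lt_def] at hab
  omega

lemma nonempty_cycleGraph_embedding {n : ℕ} (f : ℕ → V)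
    (hinj : Set.InjOn f (Set.Iio n))
    (hadj : ∀ s t, s < t → t < n → (G.Adj (f s) (f t) ↔ t = s + 1 ∨ (s = 0 ∧ t + 1 = n))) :
    Nonempty (cycleGraph n ↪g G) := by
  refine ⟨⟨⟨fun a => f a, fun a b hab => Fin.ext (hinj a.isLt b.isLt hab)⟩, fun {a b} => ?_⟩⟩
  rcases lt_trichotomy a b with hab | rfl | hab
  · exact (hadj _ _ hab b.isLt).trans (cycleGraph_adj_of_lt hab).symm
  · simp
  · rw [G.adj_comm, (cycleGraph n).adj_comm]
    exact (hadj _ _ hab a.isLt).trans (cycleGraph_adj_of_lt hab).symm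

lemma SimpleGraph.Walk.dist_getVert_of_length_eq_dist {u v : V} (p : G.Walk u v)
    (hp : p.length = G.dist u v) {i : ℕ} (hi : i ≤ p.length) :
    G.dist u (p.getVert i) = i ∧ G.dist (p.getVert i) v = p.length - i := by
  rw [← length_eq_dist_of_subwalk hp (p.isSubwalk_take i),
    ← length_eq_dist_of_subwalk hp (p.isSubwalk_drop i), Walk.take_length, Walk.drop_length]
  omega

/-- Two geodesics `x 0, …, x k` and `y 0, …, y k` with a common end, each `x i` (`i < k`) one
step farther from `y 0` than from `x 0` and vice versa: the configuration built from an edge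
`x 0 y 0` and a vertex at minimal equal distance `k` from its ends. -/
structure Ladder (G : SimpleGraph V) (k : ℕ) (x y : ℕ → V) : Prop where
  adj_x : ∀ i < k, G.Adj (x i) (x (i + 1))
  adj_y : ∀ i < k, G.Adj (y i) (y (i + 1))
  top : x k = y k
  dist_x : ∀ i ≤ k, G.dist (x 0) (x i) = i
  dist_y : ∀ i ≤ k, G.dist (y 0) (y i) = i
  dist_x_y : ∀ i ≤ k, G.dist (x 0) (y i) = min (i + 1) k
  dist_y_x : ∀ i ≤ k, G.dist (y 0) (x i) = min (i + 1) k

namespace Ladder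

variable {k : ℕ} {x y : ℕ → V} {i j : ℕ}

lemma symm (h : Ladder G k x y) : Ladder G k y x :=
  ⟨h.adj_y, h.adj_x, h.top.symm, h.dist_y, h.dist_x, h.dist_y_x, h.dist_x_y⟩

lemma adj_bot (h : Ladder G k x y) (hk : 0 < k) : G.Adj (x 0) (y 0) := by
  rw [← dist_eq_one_iff_adj, h.dist_x_y 0 k.zero_le]
  omega

lemma eq_of_x_eq_x (h : Ladder G k x y) (hi : i ≤ k) (hj : j ≤ k) (he : x i = x j) : i = j := by
  rw [← h.dist_x i hi, ← h.dist_x j hj, he]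

lemma eq_top_of_x_eq_y (h : Ladder G k x y) (hi : i ≤ k) (hj : j ≤ k) (he : x i = y j) :
    i = k ∧ j = k := by
  have h1 := h.dist_x i hi
  have h2 := h.dist_y_x i hi
  rw [he, h.dist_x_y j hj] at h1
  rw [he, h.dist_y j hj] at h2
  omega

lemma adj_x_x_iff (h : Ladder G k x y) (hi : i ≤ k) (hj : j ≤ k) :
    G.Adj (x i) (x j) ↔ j = i + 1 ∨ i = j + 1 := by
  constructor
  · intro ha
    have hij : i ≠ j := by rintro rfl; exact G.irrefl ha
    have := ha.diff_dist_adj (u := x 0)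
    rw [h.dist_x i hi, h.dist_x j hj] at this
    omega
  · rintro (rfl | rfl)
    · exact h.adj_x i (by omega)
    · exact (h.adj_x j (by omega)).symm

lemma eq_of_adj_x_y (h : Ladder G k x y) (hi : i ≤ k) (hj : j ≤ k) (ha : G.Adj (x i) (y j)) :
    i = j ∨ (i = k ∧ j + 1 = k) ∨ (i + 1 = k ∧ j = k) := by
  have h1 := ha.diff_dist_adj (u := x 0)
  have h2 := ha.diff_dist_adj (u := y 0)
  rw [h.dist_x i hi, h.dist_x_y j hj] at h1
  rw [h.dist_y_x i hi, h.dist_y j hj] at h2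
  omega

lemma dist_x_x (hG : G.Connected) (h : Ladder G k x y) (hij : i ≤ j) (hj : j ≤ k) :
    G.dist (x i) (x j) = j - i := by
  have upper : G.dist (x i) (x j) ≤ j - i := by
    induction j, hij using Nat.le_induction with
    | base => simp
    | succ j hij ih =>
      have := (h.adj_x j (by omega)).diff_dist_adj (u := x i)
      have := ih (by omega)
      omega
  have := hG.dist_triangle (u := x 0) (v := x i) (w := x j)
  rw [h.dist_x i (by omega), h.dist_x j hj] at this
  omega

lemma dist_x_y_of_adj (hG : G.Connected) (h : Ladder G k x y) {a : ℕ} (ha : a < k)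
    (hxy : G.Adj (x a) (y a)) (hi : i ≤ k - a) :
    G.dist (x a) (y (a + i)) = min (i + 1) (k - a) := by
  have lower := hG.dist_triangle (u := x 0) (v := x a) (w := y (a + i))
  rw [h.dist_x a ha.le, h.dist_x_y (a + i) (by omega)] at lower
  have upper := hG.dist_triangle (u := x a) (v := y a) (w := y (a + i))
  rw [dist_eq_one_iff_adj.mpr hxy, h.symm.dist_x_x hG (by omega) (by omega)] at upper
  have at_top : a + i = k → G.dist (x a) (y (a + i)) = k - a := fun e => by
    rw [e, ← h.top, h.dist_x_x hG ha.le le_rfl]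
  omega

lemma shift (hG : G.Connected) (h : Ladder G k x y) {a : ℕ} (ha : a < k)
    (hxy : G.Adj (x a) (y a)) : Ladder G (k - a) (fun i => x (a + i)) (fun i => y (a + i)) where
  adj_x i hi := h.adj_x (a + i) (by omega)
  adj_y i hi := h.adj_y (a + i) (by omega)
  top := by simp only [Nat.add_sub_cancel' ha.le, h.top]
  dist_x i hi := by simp only [Nat.add_zero, h.dist_x_x hG (Nat.le_add_right a i) (by omega)]; omega
  dist_y i hi := by
    simp only [Nat.add_zero, h.symm.dist_x_x hG (Nat.le_add_right a i) (by omega)]; omega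
  dist_x_y i hi := h.dist_x_y_of_adj hG ha hxy hi
  dist_y_x i hi := h.symm.dist_x_y_of_adj hG ha hxy.symm hi

/-- The closed walk `x 0, …, x L, y (k - 1), …, y 0`, with `L = k` or `L = k - 1`. -/
def ladderCycle (x y : ℕ → V) (L k t : ℕ) : V := if t ≤ L then x t else y (L + k - t)

lemma injOn_ladderCycle (h : Ladder G k x y) {L : ℕ} (hL : L ≤ k) :
    Set.InjOn (ladderCycle x y L k) (Set.Iio (L + k + 1)) := by
  intro s hs t ht he
  simp only [Set.mem_Iio] at hs ht
  unfold ladderCycle at he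
  split_ifs at he with hsL htL htL
  · exact h.eq_of_x_eq_x (by omega) (by omega) he
  · have := h.eq_top_of_x_eq_y (by omega) (by omega) he
    omega
  · have := h.eq_top_of_x_eq_y (by omega) (by omega) he.symm
    omega
  · have := h.symm.eq_of_x_eq_x (by omega) (by omega) he
    omega

lemma adj_ladderCycle_iff (h : Ladder G k x y) (hk : 0 < k) {L : ℕ} (hL : L = k ∨ L + 1 = k)
    (hrung : ∀ i, 0 < i → i + 1 < k → ¬G.Adj (x i) (y i))
    (htop : G.Adj (x (k - 1)) (y (k - 1)) ↔ L + 1 = k) {s t : ℕ} (hst : s < t)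
    (ht : t < L + k + 1) :
    G.Adj (ladderCycle x y L k s) (ladderCycle x y L k t) ↔
      t = s + 1 ∨ (s = 0 ∧ t + 1 = L + k + 1) := by
  unfold ladderCycle
  split_ifs with hsL htL htL
  · rw [h.adj_x_x_iff (by omega) (by omega)]
    omega
  · constructor
    · intro ha
      rcases h.eq_of_adj_x_y (by omega) (by omega) ha with e | e | e
      · obtain rfl | hs := Nat.eq_zero_or_pos s
        · omega
        have hsk : s = k - 1 := by
          by_contra hsk
          exact hrung s hs (by omega) (e ▸ ha)
        have := htop.mp (hsk ▸ e ▸ ha)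
        omega
      · omega
      · omega
    · rintro (rfl | ⟨rfl, ht⟩)
      · obtain rfl : s = L := by omega
        obtain rfl | hL := hL
        · rw [h.top, show s + s - (s + 1) = s - 1 by omega]
          convert (h.adj_y (s - 1) (by omega)).symm using 2
          omega
        · rw [show s + k - (s + 1) = s by omega, show s = k - 1 by omega]
          exact htop.mpr hL
      · rw [show L + k - t = 0 by omega]
        exact h.adj_bot hk
  · omega
  · rw [h.symm.adj_x_x_iff (by omega) (by omega)]
    omega

lemma nonempty_house_embedding_of_two (h : Ladder G 2 x y) (hrung : G.Adj (x 1) (y 1)) :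
    Nonempty (house ↪g G) := by
  have h20 : ¬G.Adj (x 2) (x 0) := by rw [h.adj_x_x_iff (by omega) (by omega)]; omega
  refine nonempty_house_embedding_s16 (h.adj_x 1 (by omega)).symm (h.adj_x 0 (by omega)).symm
    (h.adj_bot (by omega)) (h.adj_y 0 (by omega)) ?_ hrung h20 ?_ ?_ ?_
  · rw [h.top]
    exact h.adj_y 1 (by omega)
  all_goals
    intro ha
    have := h.eq_of_adj_x_y (by omega) (by omega) ha
    omega

theorem not_hhFree (hG : G.Connected) (h : Ladder G k x y) (hk : 2 ≤ k) : ¬HHFree G := by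
  intro hH
  induction k using Nat.strong_induction_on generalizing x y with
  | _ k ih =>
  by_cases hrung : ∃ a, 0 < a ∧ a + 1 < k ∧ G.Adj (x a) (y a)
  · obtain ⟨a, ha, hak, hxy⟩ := hrung
    exact ih (k - a) (by omega) (h.shift hG (by omega) hxy) (by omega)
  push Not at hrung
  by_cases htop : G.Adj (x (k - 1)) (y (k - 1))
  · obtain rfl | hk3 : k = 2 ∨ 3 ≤ k := by omega
    · exact hH.1.false (h.nonempty_house_embedding_of_two htop).some
    · obtain ⟨e⟩ := nonempty_cycleGraph_embedding _ (h.injOn_ladderCycle (L := k - 1) (by omega))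
        fun s t hst ht => h.adj_ladderCycle_iff (by omega) (by omega) hrung
          (iff_of_true htop (by omega)) hst ht
      exact (hH.2 _ (by omega)).false e
  · obtain ⟨e⟩ := nonempty_cycleGraph_embedding _ (h.injOn_ladderCycle (L := k) le_rfl)
      fun s t hst ht => h.adj_ladderCycle_iff (by omega) (by omega) hrung
        (iff_of_false htop (by omega)) hst ht
    exact (hH.2 _ (by omega)).false e

end Ladder

lemma dist_getVert_eq_min (hG : G.Connected) {u v z : V} {k : ℕ}
    (huv : G.Adj u v) (hu : G.dist u z = k) (hv : G.dist v z = k)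
    (hmin : ∀ w, G.dist u w = G.dist v w → k ≤ G.dist u w)
    (q : G.Walk v z) (hq : q.length = G.dist v z) {i : ℕ} (hi : i ≤ k) :
    G.dist u (q.getVert i) = min (i + 1) k := by
  obtain ⟨h1, h2⟩ := q.dist_getVert_of_length_eq_dist hq (i := i) (by omega)
  have h3 := hG.dist_triangle (u := u) (v := q.getVert i) (w := z)
  have h4 := hG.dist_triangle (u := u) (v := z) (w := q.getVert i)
  have h5 := huv.diff_dist_adj (u := q.getVert i)
  have h6 := hmin (q.getVert i)
  rw [dist_comm (u := z)] at h4
  rw [dist_comm (v := u), dist_comm (v := v)] at h5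
  omega

lemma exists_ladder_of_minimal (hG : G.Connected) {u v z : V} {k : ℕ}
    (huv : G.Adj u v) (hu : G.dist u z = k) (hv : G.dist v z = k)
    (hmin : ∀ w, G.dist u w = G.dist v w → k ≤ G.dist u w) : ∃ x y, Ladder G k x y := by
  obtain ⟨p, hp⟩ := hG.exists_walk_length_eq_dist u z
  obtain ⟨q, hq⟩ := hG.exists_walk_length_eq_dist v z
  have hmin' : ∀ w, G.dist v w = G.dist u w → k ≤ G.dist v w := fun w hw => hw ▸ hmin w hw.symm
  refine ⟨p.getVert, q.getVert, fun i hi => p.adj_getVert_succ (by omega),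
    fun i hi => q.adj_getVert_succ (by omega), ?_, fun i hi => ?_, fun i hi => ?_,
    fun i hi => ?_, fun i hi => ?_⟩
  · rw [p.getVert_of_length_le (by omega), q.getVert_of_length_le (by omega)]
  · rw [p.getVert_zero]
    exact (p.dist_getVert_of_length_eq_dist hp (by omega)).1
  · rw [q.getVert_zero]
    exact (q.dist_getVert_of_length_eq_dist hq (i := i) (by omega)).1
  · rw [p.getVert_zero]
    exact dist_getVert_eq_min hG huv hu hv hmin q hq hi
  · rw [q.getVert_zero]
    exact dist_getVert_eq_min hG huv.symm hv hu hmin' p hp hi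

lemma dist_ne_dist_of_forall_not_adj (hG : G.Connected) (hH : HHFree G)
    {u v : V} (huv : G.Adj u v) (hno : ∀ w, G.Adj u w → ¬G.Adj v w) (z : V) :
    G.dist u z ≠ G.dist v z := by
  classical
  intro hz
  have hP : ∃ k, ∃ z, G.dist u z = k ∧ G.dist v z = k := ⟨_, z, rfl, hz.symm⟩
  obtain ⟨z, hu, hv⟩ := Nat.find_spec hP
  have hmin : ∀ w, G.dist u w = G.dist v w → Nat.find hP ≤ G.dist u w :=
    fun w hw => Nat.find_min' hP ⟨w, rfl, hw.symm⟩
  have hk : 2 ≤ Nat.find hP := by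
    by_contra! hk
    interval_cases Nat.find hP
    · exact huv.ne ((hG.dist_eq_zero_iff.mp hu).trans (hG.dist_eq_zero_iff.mp hv).symm)
    · exact hno z (dist_eq_one_iff_adj.mp hu) (dist_eq_one_iff_adj.mp hv)
  obtain ⟨x, y, h⟩ := exists_ladder_of_minimal hG huv hu hv hmin
  exact h.not_hhFree hG hk hH

lemma line_eq_univ_of_dist_ne {u v : V} (huv : G.Adj u v)
    (h : ∀ z, G.dist u z ≠ G.dist v z) : line G u v = Set.univ := by
  refine Set.eq_univ_of_forall fun z => ?_
  have hz := h z
  have hdiff := huv.diff_dist_adj (u := z)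
  rw [dist_comm (u := u), dist_comm (u := v)] at hz
  simp only [line, interval, Set.mem_ofPred_eq, dist_eq_one_iff_adj.mpr huv,
    dist_comm (u := u) (v := z), dist_comm (u := v) (v := z)]
  omega

end

theorem stmt16 (G : SimpleGraph V) (hG : G.Connected) (hH : HHFree G)
    (hNoUnivEdge : ∀ a b : V, G.Adj a b → line G a b ≠ Set.univ) :
    ∀ u v : V, G.Adj u v → ∃ w : V, G.Adj u w ∧ G.Adj v w := by
  intro u v huv
  by_contra! hno
  exact hNoUnivEdge u v huv
    (line_eq_univ_of_dist_ne huv (dist_ne_dist_of_forall_not_adj hG hH huv hno))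
end

section
/- In a connected graph G, if two pairs of vertices uv and xy are γ-related (i.e., (u,x,v,y) is a parallelogram with line(u,v) = I(u,v) = I(x,y) = line(x,y)) and d(u,v) = 2, then x and y are common neighbours of u and v, and {u,x,v,y} induces a 4-cycle. -/
open SimpleGraph

variable {V : Type*}

theorem stmt19 (G : SimpleGraph V) (hG : G.Connected)
    (u v x y : V) (hnd : ([u, x, v, y] : List V).Nodup)
    (p1 : x ∈ interval G u v) (p2 : v ∈ interval G x y)
    (p3 : y ∈ interval G v u) (p4 : u ∈ interval G y x)
    (hl1 : line G u v = interval G u v) (hl2 : line G x y = interval G x y)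
    (hl3 : interval G u v = interval G x y)
    (heq : line G u v = line G x y)
    (hd : G.dist u v = 2) :
    G.Adj u x ∧ G.Adj x v ∧ G.Adj v y ∧ G.Adj y u ∧
      ¬ G.Adj u v ∧ ¬ G.Adj x y := by
  simp only [List.nodup_cons, List.mem_cons, List.mem_singleton, List.not_mem_nil] at hnd
  have hux : u ≠ x := by tauto
  have huv : u ≠ v := by tauto
  have huy : u ≠ y := by tauto
  have hxv : x ≠ v := by tauto
  have hxy : x ≠ y := by tauto
  have hvy : v ≠ y := by tauto
  simp only [interval, Set.mem_setOf_eq] at p1 p2 p3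
  have cvu : G.dist v u = G.dist u v := SimpleGraph.dist_comm
  have adj1 : G.dist u x = 1 ↔ G.Adj u x := SimpleGraph.dist_eq_one_iff_adj
  have adj2 : G.dist x v = 1 ↔ G.Adj x v := SimpleGraph.dist_eq_one_iff_adj
  have adj3 : G.dist v y = 1 ↔ G.Adj v y := SimpleGraph.dist_eq_one_iff_adj
  have adj4 : G.dist y u = 1 ↔ G.Adj y u := SimpleGraph.dist_eq_one_iff_adj
  have adj5 : G.dist u v = 1 ↔ G.Adj u v := SimpleGraph.dist_eq_one_iff_adj
  have adj6 : G.dist x y = 1 ↔ G.Adj x y := SimpleGraph.dist_eq_one_iff_adj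
  have p1a : 0 < G.dist u x := hG.pos_dist_of_ne hux
  have p1b : 0 < G.dist x v := hG.pos_dist_of_ne hxv
  have p3a : 0 < G.dist v y := hG.pos_dist_of_ne hvy
  have p3b : 0 < G.dist y u := hG.pos_dist_of_ne (Ne.symm huy)
  have h1 : G.dist u x = 1 := by omega
  have h2 : G.dist x v = 1 := by omega
  have h3 : G.dist v y = 1 := by omega
  have h4 : G.dist y u = 1 := by omega
  refine ⟨adj1.mp h1, adj2.mp h2, adj3.mp h3, adj4.mp h4, ?_, ?_⟩
  · intro h; have := adj5.mpr h; omega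
  · intro h; have := adj6.mpr h; omega
end
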